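/- arXiv:1101.3762 — 9 statements merged into one kernel-verified Lean document; each statement's English description precedes it below -/
import Mathlib

section
/- Let φ : Set ℝ≥0∞ → Prop satisfy: φ ∅ ↔ False, φ Set.univ ↔ True, φ (sᶜ) ↔ ¬ φ s for every Borel set s, φ (s ∩ t) ↔ (φ s ∧ φ t) for all Borel sets s, t, and φ (⋃ n, s n) ↔ (∃ n, φ (s n)) for every sequence s : ℕ → Set ℝ≥0∞ of Borel sets. Then φ is induced by a unique point: there exists a unique x ∈ ℝ≥0∞ such that for every Borel set s, φ s ↔ x ∈ s. -/
/-!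
The set `{r | φ (Iic r)}` is an upper set of `[0,∞]` closed under countable infima, because
`φ` preserves intersections; as every infimum in `[0,∞]` is the limit of a sequence, this set is
`Ici x` for `x` its infimum. Then `φ` and evaluation at `x` agree on the intervals `Iic r`, which
generate the Borel σ-algebra, and the sets on which they agree form a σ-algebra.
-/

open scoped ENNReal
open Set

theorem IsUpperSet.exists_eq_Ici_of_iInf_mem {α : Type*} [CompleteLinearOrder α]
    [TopologicalSpace α] [OrderTopology α] [FirstCountableTopology α] {S : Set α}
    (hS : IsUpperSet S) (hne : S.Nonempty) (hinf : ∀ u : ℕ → α, (∀ n, u n ∈ S) → ⨅ n, u n ∈ S) :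
    ∃ x, S = Ici x := by
  obtain ⟨u, hu_anti, hu_lim, hu_mem⟩ := exists_seq_tendsto_sInf hne (OrderBot.bddBelow S)
  have hu_inf : ⨅ n, u n = sInf S := tendsto_nhds_unique (tendsto_atTop_iInf hu_anti) hu_lim
  have hmem : sInf S ∈ S := hu_inf ▸ hinf u hu_mem
  exact ⟨sInf S, Subset.antisymm (fun _ ha => sInf_le ha) (hS.Ici_subset hmem)⟩

section SigmaMorphismToProp

variable {α : Type*} [MeasurableSpace α] {φ : Set α → Prop}

theorem iInter_iff_forall_of_compl_of_iUnion
    (hcompl : ∀ s : Set α, MeasurableSet s → (φ sᶜ ↔ ¬ φ s))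
    (hUnion : ∀ s : ℕ → Set α, (∀ n, MeasurableSet (s n)) → (φ (⋃ n, s n) ↔ ∃ n, φ (s n)))
    {s : ℕ → Set α} (hs : ∀ n, MeasurableSet (s n)) :
    φ (⋂ n, s n) ↔ ∀ n, φ (s n) := by
  have hcompl_compl : ∀ n, φ (s n)ᶜ ↔ ¬ φ (s n) := fun n => hcompl _ (hs n)
  rw [← compl_compl (⋂ n, s n), compl_iInter, hcompl _ (.iUnion fun n => (hs n).compl),
    hUnion _ fun n => (hs n).compl]
  simp only [hcompl_compl, not_exists, not_not]

theorem imp_of_subset_of_inter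
    (hinter : ∀ s t : Set α, MeasurableSet s → MeasurableSet t → (φ (s ∩ t) ↔ φ s ∧ φ t))
    {s t : Set α} (hs : MeasurableSet s) (ht : MeasurableSet t) (hst : s ⊆ t) : φ s → φ t := by
  intro h
  rw [← inter_eq_left.2 hst] at h
  exact ((hinter s t hs ht).1 h).2

theorem iff_mem_of_generateFrom {C : Set (Set α)}
    (hgen : ‹MeasurableSpace α› = MeasurableSpace.generateFrom C) (hempty : φ ∅ ↔ False)
    (hcompl : ∀ s : Set α, MeasurableSet s → (φ sᶜ ↔ ¬ φ s))
    (hUnion : ∀ s : ℕ → Set α, (∀ n, MeasurableSet (s n)) → (φ (⋃ n, s n) ↔ ∃ n, φ (s n)))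
    {x : α} (hC : ∀ t ∈ C, φ t ↔ x ∈ t) {s : Set α} (hs : MeasurableSet s) : φ s ↔ x ∈ s := by
  rw [hgen] at hs
  induction s, hs using MeasurableSpace.generateFrom_induction with
  | hC t ht => exact hC t ht
  | empty => simpa using hempty
  | compl t ht iht => rw [hcompl t (hgen ▸ ht), iht, mem_compl_iff]
  | iUnion f hf ihf => rw [hUnion f fun n => hgen ▸ hf n, mem_iUnion]; exact exists_congr ihf

end SigmaMorphismToProp

/-- Every morphism of abstract σ-algebras from the Borel σ-algebra of `[0,∞]`
to the two-element abstract σ-algebra `Prop` is induced by a unique point. -/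
theorem sigmaMorphism_to_prop_is_point (φ : Set ℝ≥0∞ → Prop)
    (hempty : φ ∅ ↔ False)
    (huniv : φ Set.univ ↔ True)
    (hcompl : ∀ s : Set ℝ≥0∞, MeasurableSet s → (φ sᶜ ↔ ¬ φ s))
    (hinter : ∀ s t : Set ℝ≥0∞, MeasurableSet s → MeasurableSet t →
      (φ (s ∩ t) ↔ φ s ∧ φ t))
    (hUnion : ∀ s : ℕ → Set ℝ≥0∞, (∀ n, MeasurableSet (s n)) →
      (φ (⋃ n, s n) ↔ ∃ n, φ (s n))) :
    ∃! x : ℝ≥0∞, ∀ s : Set ℝ≥0∞, MeasurableSet s → (φ s ↔ x ∈ s) := by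
  have hupper : IsUpperSet {r | φ (Iic r)} := fun _ _ hab =>
    imp_of_subset_of_inter hinter measurableSet_Iic measurableSet_Iic (Iic_subset_Iic.2 hab)
  have hne : {r | φ (Iic r)}.Nonempty := ⟨⊤, by simpa using huniv⟩
  have hinf : ∀ u : ℕ → ℝ≥0∞, (∀ n, φ (Iic (u n))) → φ (Iic (⨅ n, u n)) := fun u hu => by
    rwa [Iic_iInf, iInter_iff_forall_of_compl_of_iUnion hcompl hUnion fun _ => measurableSet_Iic]
  obtain ⟨x, hx⟩ := hupper.exists_eq_Ici_of_iInf_mem hne hinf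
  have hIic : ∀ t ∈ range Iic, φ t ↔ x ∈ t := by
    rintro _ ⟨r, rfl⟩
    exact Set.ext_iff.1 hx r
  have hgen : ENNReal.measurableSpace = MeasurableSpace.generateFrom (range Iic) := by
    rw [BorelSpace.measurable_eq (α := ℝ≥0∞), borel_eq_generateFrom_Iic]
  have hpoint : ∀ s : Set ℝ≥0∞, MeasurableSet s → (φ s ↔ x ∈ s) := fun _ hs =>
    iff_mem_of_generateFrom hgen hempty hcompl hUnion hIic hs
  exact ⟨x, hpoint, fun y hy =>
    (hy _ (measurableSet_singleton x)).1 ((hpoint _ (measurableSet_singleton x)).2 rfl)⟩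
end

section
/- Let Σ be an abstract σ-algebra and f a nonnegative measurable function on Σ. Then there exists a sequence of simple data (aₙ, xₙ) on Σ whose induced simple functions sₙ satisfy sₙ ≤ sₙ₊₁ ≤ f for all n (in the order on nonnegative measurable functions) and sₙ ↗ f, i.e. for every t ∈ ℝ≥0∞, f (Set.Iic t) is a greatest lower bound of the set {sₙ (Set.Iic t) | n ∈ ℕ}. -/
open scoped ENNReal

/-- A nonnegative measurable function on an abstract σ-algebra `A`:
a morphism of abstract σ-algebras from the Borel σ-algebra of `[0,∞]` to `A`,
encoded as a map on sets constrained on Borel sets. -/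
structure NNMeasFun (A : Type*) [BooleanAlgebra A] where
  toFun : Set ℝ≥0∞ → A
  map_empty : toFun ∅ = ⊥
  map_univ : toFun Set.univ = ⊤
  map_compl : ∀ s : Set ℝ≥0∞, MeasurableSet s → toFun sᶜ = (toFun s)ᶜ
  map_inter : ∀ s t : Set ℝ≥0∞, MeasurableSet s → MeasurableSet t →
    toFun (s ∩ t) = toFun s ⊓ toFun t
  map_iUnion : ∀ s : ℕ → Set ℝ≥0∞, (∀ n, MeasurableSet (s n)) →
    IsLUB (Set.range fun n => toFun (s n)) (toFun (⋃ n, s n))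

/-- Simple data on `A`: a pairwise disjoint finite family with supremum `⊤`,
together with values in `[0,∞]`. -/
structure SimpleData (A : Type*) [BooleanAlgebra A] where
  m : ℕ
  a : Fin m → A
  x : Fin m → ℝ≥0∞
  disjoint : ∀ i j, i ≠ j → a i ⊓ a j = ⊥
  sup_eq_top : Finset.univ.sup a = ⊤

open scoped Classical in
/-- The simple nonnegative measurable function induced by simple data. -/
noncomputable def SimpleData.toFun {A : Type*} [BooleanAlgebra A] (d : SimpleData A)
    (b : Set ℝ≥0∞) : A :=
  (Finset.univ.filter fun i => d.x i ∈ b).sup d.a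

/-!
Compose `f` with the dyadic-rational approximations `φₙ = eapprox id n` of the identity of
`[0,∞]`. Each `φₙ` is a Borel simple function, so `b ↦ f (φₙ⁻¹ b)` is induced by the simple
data made of the images under `f` of the fibres of `φₙ`. Since `φₙ ≤ φₙ₊₁ ≤ id`, the
preimages `φₙ⁻¹ (Iic t)` decrease and contain `Iic t`; since `⨆ n, φₙ = id` they intersect to
`Iic t`, and `f` preserves this countable intersection because it preserves countable unions
and complements.
-/

open MeasureTheory SimpleFunc

namespace NNMeasFun

variable {A : Type*} [BooleanAlgebra A] (f : NNMeasFun A)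

lemma mono {s t : Set ℝ≥0∞} (hs : MeasurableSet s) (ht : MeasurableSet t) (hst : s ⊆ t) :
    f.toFun s ≤ f.toFun t := by
  rw [← Set.inter_eq_left.mpr hst, f.map_inter s t hs ht]
  exact inf_le_right

lemma map_union {s t : Set ℝ≥0∞} (hs : MeasurableSet s) (ht : MeasurableSet t) :
    f.toFun (s ∪ t) = f.toFun s ⊔ f.toFun t := by
  rw [← compl_compl (s ∪ t), Set.compl_union, f.map_compl _ (hs.compl.inter ht.compl),
    f.map_inter _ _ hs.compl ht.compl, f.map_compl s hs, f.map_compl t ht, compl_inf,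
    compl_compl, compl_compl]

lemma map_biUnion_finset {ι : Type*} (s : Finset ι) {t : ι → Set ℝ≥0∞}
    (ht : ∀ i, MeasurableSet (t i)) :
    f.toFun (⋃ i ∈ s, t i) = s.sup fun i => f.toFun (t i) := by
  classical
  induction s using Finset.induction_on with
  | empty => simpa using f.map_empty
  | insert i s _ ih =>
    rw [Finset.set_biUnion_insert, Finset.sup_insert,
      f.map_union (ht i) (Finset.measurableSet_biUnion s fun i _ => ht i), ih]

lemma isGLB_map_iInter {s : ℕ → Set ℝ≥0∞} (hs : ∀ n, MeasurableSet (s n)) :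
    IsGLB (Set.range fun n => f.toFun (s n)) (f.toFun (⋂ n, s n)) := by
  have hlub := f.map_iUnion (fun n => (s n)ᶜ) fun n => (hs n).compl
  rw [← Set.compl_iInter, f.map_compl _ (.iInter hs)] at hlub
  refine ⟨?_, fun b hb => ?_⟩
  · rintro _ ⟨n, rfl⟩
    exact f.mono (.iInter hs) (hs n) (Set.iInter_subset s n)
  · rw [← compl_le_compl_iff_le]
    refine hlub.2 ?_
    rintro _ ⟨n, rfl⟩
    dsimp only
    rw [f.map_compl _ (hs n)]
    exact compl_le_compl (hb ⟨n, rfl⟩)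

noncomputable def compSimpleFunc (φ : SimpleFunc ℝ≥0∞ ℝ≥0∞) : SimpleData A where
  m := φ.range.card
  a i := f.toFun (φ ⁻¹' {(φ.range.equivFin.symm i : ℝ≥0∞)})
  x i := φ.range.equivFin.symm i
  disjoint i j hij := by
    have hne : (φ.range.equivFin.symm i : ℝ≥0∞) ≠ φ.range.equivFin.symm j :=
      Subtype.val_injective.ne (φ.range.equivFin.symm.injective.ne hij)
    rw [← f.map_inter _ _ (φ.measurableSet_preimage _) (φ.measurableSet_preimage _),
      ← Set.preimage_inter, Set.singleton_inter_eq_empty.mpr (Set.notMem_singleton_iff.mpr hne),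
      Set.preimage_empty, f.map_empty]
  sup_eq_top := by
    rw [← f.map_biUnion_finset _ fun _ => φ.measurableSet_preimage _, ← f.map_univ]
    congr 1
    refine Set.eq_univ_of_forall fun y => Set.mem_biUnion (Finset.mem_univ
      (φ.range.equivFin ⟨φ y, φ.mem_range_self y⟩)) ?_
    simp

lemma toFun_compSimpleFunc (φ : SimpleFunc ℝ≥0∞ ℝ≥0∞) (b : Set ℝ≥0∞) :
    (f.compSimpleFunc φ).toFun b = f.toFun (φ ⁻¹' b) := by
  unfold SimpleData.toFun compSimpleFunc
  rw [← f.map_biUnion_finset _ fun _ => φ.measurableSet_preimage _]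
  congr 1
  ext y
  simp only [Set.mem_iUnion, Finset.mem_filter, Finset.mem_univ, true_and, Set.mem_preimage,
    Set.mem_singleton_iff, exists_prop]
  constructor
  · rintro ⟨i, hi, hy⟩
    exact hy ▸ hi
  · intro hy
    exact ⟨φ.range.equivFin ⟨φ y, φ.mem_range_self y⟩, by simpa using hy, by simp⟩

end NNMeasFun

namespace MeasureTheory.SimpleFunc

variable {α : Type*} [MeasurableSpace α] {g : α → ℝ≥0∞}

lemma eapprox_le (hg : Measurable g) (n : ℕ) (y : α) : eapprox g n y ≤ g y :=
  iSup_eapprox_apply hg y ▸ le_iSup (fun n => eapprox g n y) n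

lemma iInter_preimage_eapprox_Iic (hg : Measurable g) (t : ℝ≥0∞) :
    ⋂ n, eapprox g n ⁻¹' Set.Iic t = g ⁻¹' Set.Iic t := by
  ext y
  simp only [Set.mem_iInter, Set.mem_preimage, Set.mem_Iic]
  refine ⟨fun hy => ?_, fun hy n => (eapprox_le hg n y).trans hy⟩
  rw [← iSup_eapprox_apply hg y]
  exact iSup_le hy

end MeasureTheory.SimpleFunc

theorem exists_simple_approximation_general {A : Type*} [BooleanAlgebra A]
    (f : NNMeasFun A) :
    ∃ d : ℕ → SimpleData A,
      (∀ (n : ℕ) (t : ℝ≥0∞), (d (n + 1)).toFun (Set.Iic t) ≤ (d n).toFun (Set.Iic t)) ∧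
      (∀ (n : ℕ) (t : ℝ≥0∞), f.toFun (Set.Iic t) ≤ (d n).toFun (Set.Iic t)) ∧
      (∀ t : ℝ≥0∞,
        IsGLB (Set.range fun n => (d n).toFun (Set.Iic t)) (f.toFun (Set.Iic t))) := by
  refine ⟨fun n => f.compSimpleFunc (eapprox id n), fun n t => ?_, fun n t => ?_, fun t => ?_⟩
    <;> simp only [NNMeasFun.toFun_compSimpleFunc]
  · exact f.mono ((eapprox id (n + 1)).measurableSet_preimage _)
      ((eapprox id n).measurableSet_preimage _)
      fun y hy => (monotone_eapprox id n.le_succ y).trans hy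
  · exact f.mono measurableSet_Iic ((eapprox id n).measurableSet_preimage _)
      fun y hy => (eapprox_le measurable_id n y).trans hy
  · simpa only [iInter_preimage_eapprox_Iic measurable_id, Set.preimage_id] using
      f.isGLB_map_iInter fun n => (eapprox id n).measurableSet_preimage (Set.Iic t)

/-- Every nonnegative measurable function on an abstract σ-algebra is the
increasing limit of a sequence of simple functions. -/
theorem exists_simple_approximation {A : Type*} [BooleanAlgebra A]
    (hA : ∀ a : ℕ → A, ∃ s, IsLUB (Set.range a) s) (f : NNMeasFun A) :
    ∃ d : ℕ → SimpleData A,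
      (∀ (n : ℕ) (t : ℝ≥0∞), (d (n + 1)).toFun (Set.Iic t) ≤ (d n).toFun (Set.Iic t)) ∧
      (∀ (n : ℕ) (t : ℝ≥0∞), f.toFun (Set.Iic t) ≤ (d n).toFun (Set.Iic t)) ∧
      (∀ t : ℝ≥0∞,
        IsGLB (Set.range fun n => (d n).toFun (Set.Iic t)) (f.toFun (Set.Iic t))) :=
  exists_simple_approximation_general f
end

section
/- (Additivity of the point-free integral.) Let Σ be an abstract σ-algebra with measure μ, and let f, g, h be nonnegative measurable functions on Σ such that h = f + g in the point-free sense: for every t ∈ ℝ≥0∞ there exists c : ℕ → Σ such that for each n, c n is a least upper bound of the countable set {f (Set.Iic q) ⊓ g (Set.Iic r) | q, r ∈ ℚ≥0 ∪ {∞} ⊆ ℝ≥0∞, q + r ≤ t + 1/(n+1)}, and h (Set.Iic t) is a greatest lower bound of Set.range c. Then ∫ h dμ = ∫ f dμ + ∫ g dμ. -/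
open scoped ENNReal NNReal NNRat

/-- The point-free integral of `f` with respect to `μ`: the supremum of the
integrals of simple functions lying below `f`. -/
noncomputable def pfIntegral {A : Type*} [BooleanAlgebra A] (μ : A → ℝ≥0∞)
    (f : Set ℝ≥0∞ → A) : ℝ≥0∞ :=
  ⨆ (d : SimpleData A) (_ : ∀ t : ℝ≥0∞, f (Set.Iic t) ≤ d.toFun (Set.Iic t)),
    ∑ i, μ (d.a i) * d.x i


/-!
A simple function below `f` and one below `g` have a common refinement, and adding their
values gives a simple function below `h`: on a piece where `f ≥ x` and `g ≥ y`, every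
`{f ≤ q} ⊓ {g ≤ r}` with `q + r < x + y` misses the piece, hence so does `{h ≤ t}` for
`t < x + y`. This gives `∫ f + ∫ g ≤ ∫ h`.

Conversely, let `a` be a piece of a simple function below `h` on which `h ≥ x`, and let `t < x`.
The definition of `f + g` provides `c n ≥ {h ≤ t}` decreasing to `{h ≤ t}`, so `a` is the
increasing supremum of the `a \ c n`. Cutting `a \ c n` along the levels `{f ≤ j δ}` for a
rational mesh `δ < 1 / (n + 1)` yields pieces on which `f ≥ j δ - δ` and
`g ≥ t + 1 / (n + 1) - j δ`, so that `f + g ≥ t` there. Countable additivity lets `n → ∞`, and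
then `t ↑ x`.
-/

section

variable {A : Type*} [BooleanAlgebra A]

open Set Function Filter Topology

/-- `f ≥ s` on `b`: `b` misses `{f ≤ t}` for every `t < s`. -/
def GeOn (f : Set ℝ≥0∞ → A) (b : A) (s : ℝ≥0∞) : Prop :=
  ∀ t < s, Disjoint b (f (Iic t))

theorem geOn_zero (f : Set ℝ≥0∞ → A) (b : A) : GeOn f b 0 :=
  fun _ ht => (ENNReal.not_lt_zero ht).elim

theorem GeOn.anti {f : Set ℝ≥0∞ → A} {b b' : A} {s : ℝ≥0∞} (h : GeOn f b s) (hb : b' ≤ b) :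
    GeOn f b' s :=
  fun t ht => (h t ht).mono_left hb

namespace SimpleData

def IsBelow (d : SimpleData A) (f : Set ℝ≥0∞ → A) : Prop :=
  ∀ t, f (Iic t) ≤ d.toFun (Iic t)

noncomputable def integral (μ : A → ℝ≥0∞) (d : SimpleData A) : ℝ≥0∞ :=
  ∑ i, μ (d.a i) * d.x i

theorem IsBelow.integral_le_pfIntegral {d : SimpleData A} {f : Set ℝ≥0∞ → A}
    (hd : d.IsBelow f) (μ : A → ℝ≥0∞) : d.integral μ ≤ pfIntegral μ f :=
  le_iSup₂_of_le d hd le_rfl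

theorem pairwise_disjoint (d : SimpleData A) : Pairwise (Disjoint on d.a) :=
  fun _ _ hij => disjoint_iff.2 (d.disjoint _ _ hij)

theorem isBelow_iff (d : SimpleData A) (f : Set ℝ≥0∞ → A) :
    d.IsBelow f ↔ ∀ i, GeOn f (d.a i) (d.x i) := by
  constructor
  · intro hd i t ht
    refine (Finset.disjoint_sup_right.2 fun j hj => d.pairwise_disjoint ?_).mono_right (hd t)
    rintro rfl
    simp only [Finset.mem_filter, mem_Iic] at hj
    exact hj.2.not_gt ht
  · intro hd t
    calc f (Iic t) = Finset.univ.sup fun i => f (Iic t) ⊓ d.a i := by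
          rw [← Finset.sup_inf_distrib_left, d.sup_eq_top, inf_top_eq]
      _ ≤ d.toFun (Iic t) := Finset.sup_le fun i _ => ?_
    by_cases hi : d.x i ≤ t
    · exact inf_le_right.trans (Finset.le_sup (f := d.a) (by simpa using hi))
    · rw [((hd i t (not_le.1 hi)).symm).eq_bot]
      exact bot_le

noncomputable def ofFintype {ι : Type*} [Fintype ι] (a : ι → A) (x : ι → ℝ≥0∞)
    (ha : Pairwise (Disjoint on a)) (htop : Finset.univ.sup a = ⊤) : SimpleData A where
  m := Fintype.card ι
  a := a ∘ (Fintype.equivFin ι).symm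
  x := x ∘ (Fintype.equivFin ι).symm
  disjoint _ _ hij := disjoint_iff.1 (ha ((Fintype.equivFin ι).symm.injective.ne hij))
  sup_eq_top := by
    rw [← htop, ← Finset.univ_map_equiv_to_embedding (Fintype.equivFin ι).symm, Finset.sup_map]
    rfl

section ofFintype

variable {ι : Type*} [Fintype ι] {a : ι → A} {x : ι → ℝ≥0∞}
  (ha : Pairwise (Disjoint on a)) (htop : Finset.univ.sup a = ⊤)

theorem integral_ofFintype (μ : A → ℝ≥0∞) :
    (ofFintype a x ha htop).integral μ = ∑ i, μ (a i) * x i :=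
  Equiv.sum_comp (Fintype.equivFin ι).symm fun i => μ (a i) * x i

theorem isBelow_ofFintype {f : Set ℝ≥0∞ → A} (hf : ∀ i, GeOn f (a i) (x i)) :
    (ofFintype a x ha htop).IsBelow f :=
  (isBelow_iff _ f).2 fun _ => hf _

end ofFintype

theorem exists_isBelow (f : Set ℝ≥0∞ → A) : ∃ d : SimpleData A, d.IsBelow f :=
  ⟨ofFintype (fun _ : Unit => ⊤) 0 Subsingleton.pairwise (by simp),
    isBelow_ofFintype _ _ fun _ => geOn_zero f ⊤⟩

end SimpleData

theorem sum_mul_le_pfIntegral (μ : A → ℝ≥0∞) {f : Set ℝ≥0∞ → A} {ι : Type*} [Fintype ι]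
    {b : ι → A} {u : ι → ℝ≥0∞} (hb : Pairwise (Disjoint on b))
    (hu : ∀ i, GeOn f (b i) (u i)) :
    ∑ i, μ (b i) * u i ≤ pfIntegral μ f := by
  -- complete `b` to a partition by the complement of its supremum, with value `0` there
  let b' : Option ι → A := fun o => o.elim (Finset.univ.sup b)ᶜ b
  let u' : Option ι → ℝ≥0∞ := fun o => o.elim 0 u
  have hb' : Pairwise (Disjoint on b') := by
    rintro (_ | i) (_ | j) hij
    · exact absurd rfl hij
    · exact disjoint_compl_left.mono_right (Finset.le_sup (f := b) (Finset.mem_univ j))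
    · exact disjoint_compl_right.mono_left (Finset.le_sup (f := b) (Finset.mem_univ i))
    · exact hb fun h => hij (congrArg some h)
  have htop : Finset.univ.sup b' = ⊤ :=
    eq_top_iff.2 <| compl_sup_eq_top.ge.trans <|
      sup_le (Finset.le_sup (f := b') (Finset.mem_univ none))
        (Finset.sup_le fun i _ => Finset.le_sup (f := b') (Finset.mem_univ (some i)))
  have hu' : ∀ o, GeOn f (b' o) (u' o) := by
    rintro (_ | i)
    · exact geOn_zero f _
    · exact hu i
  calc ∑ i, μ (b i) * u i = (SimpleData.ofFintype b' u' hb' htop).integral μ := by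
        simp [SimpleData.integral_ofFintype, Fintype.sum_option, b', u']
    _ ≤ pfIntegral μ f := (SimpleData.isBelow_ofFintype hb' htop hu').integral_le_pfIntegral μ

def IsCountablyAdditive (μ : A → ℝ≥0∞) : Prop :=
  ∀ a : ℕ → A, (∀ i j, i ≠ j → a i ⊓ a j = ⊥) →
    ∀ s, IsLUB (Set.range a) s → μ s = ∑' n, μ (a n)

namespace IsCountablyAdditive

variable {μ : A → ℝ≥0∞}

theorem measure_sup_of_disjoint (hμ : IsCountablyAdditive μ) (h0 : μ ⊥ = 0) {x y : A}
    (hxy : Disjoint x y) : μ (x ⊔ y) = μ x + μ y := by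
  let a : ℕ → A := fun | 0 => x | 1 => y | _ => ⊥
  have ha : ∀ i j, i ≠ j → a i ⊓ a j = ⊥ := by
    rintro (_ | _ | i) (_ | _ | j) hij <;> simp_all [a, hxy.eq_bot, hxy.symm.eq_bot]
  have hlub : IsLUB (range a) (x ⊔ y) :=
    ⟨by rintro _ ⟨_ | _ | n, rfl⟩ <;> simp [a],
      fun u hu => sup_le (hu ⟨0, rfl⟩) (hu ⟨1, rfl⟩)⟩
  rw [hμ a ha _ hlub, tsum_eq_sum (s := Finset.range 2)]
  · simp [Finset.sum_range_succ, a]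
  · rintro (_ | _ | n) hn <;> simp_all [a]

theorem measure_finset_sup (hμ : IsCountablyAdditive μ) (h0 : μ ⊥ = 0) {ι : Type*}
    {a : ι → A} (ha : Pairwise (Disjoint on a)) (s : Finset ι) :
    μ (s.sup a) = ∑ i ∈ s, μ (a i) := by
  classical
  induction s using Finset.induction_on with
  | empty => simpa using h0
  | insert i s hi ih =>
    rw [Finset.sup_insert, Finset.sum_insert hi, hμ.measure_sup_of_disjoint h0, ih]
    exact Finset.disjoint_sup_right.2 fun j hj => ha (ne_of_mem_of_not_mem hj hi).symm

theorem monotone (hμ : IsCountablyAdditive μ) (h0 : μ ⊥ = 0) : Monotone μ := fun x y hxy => by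
  rw [← sup_sdiff_cancel_right hxy, hμ.measure_sup_of_disjoint h0 disjoint_sdiff_self_right]
  exact le_self_add

theorem measure_eq_iSup (hμ : IsCountablyAdditive μ) (h0 : μ ⊥ = 0) {b : ℕ → A}
    (hb : Monotone b) {s : A} (hs : IsLUB (range b) s) : μ s = ⨆ n, μ (b n) := by
  have hsup : ∀ n, (Finset.range (n + 1)).sup (disjointed b) = b n := fun n => by
    rw [← partialSups_eq_sup_range, partialSups_disjointed, hb.partialSups_eq]
  have hlub : IsLUB (range (disjointed b)) s :=
    ⟨by rintro _ ⟨n, rfl⟩; exact (disjointed_le b n).trans (hs.1 ⟨n, rfl⟩),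
      fun u hu => hs.2 <| by
        rintro _ ⟨n, rfl⟩
        rw [← hsup n]
        exact Finset.sup_le fun k _ => hu ⟨k, rfl⟩⟩
  rw [hμ _ (fun i j hij => (disjoint_disjointed b hij).eq_bot) s hlub,
    ENNReal.tsum_eq_iSup_nat' (tendsto_add_atTop_nat 1)]
  simp_rw [← hμ.measure_finset_sup h0 (disjoint_disjointed b), hsup]

end IsCountablyAdditive

theorem SimpleData.sum_measure_inf {μ : A → ℝ≥0∞} (hμ : IsCountablyAdditive μ)
    (h0 : μ ⊥ = 0) (d : SimpleData A) (x : A) : ∑ i, μ (x ⊓ d.a i) = μ x := by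
  rw [← hμ.measure_finset_sup h0 fun i j hij =>
      (d.pairwise_disjoint hij).mono inf_le_right inf_le_right,
    ← Finset.sup_inf_distrib_left, d.sup_eq_top, inf_top_eq]

/-- `f + g ≥ s` on `b`, witnessed by a finite partition of `b`. -/
def SumGeOn (f g : Set ℝ≥0∞ → A) (b : A) (s : ℝ≥0∞) : Prop :=
  ∃ (m : ℕ) (p : Fin m → A) (u v : Fin m → ℝ≥0∞), Pairwise (Disjoint on p) ∧
    Finset.univ.sup p = b ∧ ∀ j, GeOn f (p j) (u j) ∧ GeOn g (p j) (v j) ∧ s ≤ u j + v j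

theorem sumGeOn_zero (f g : Set ℝ≥0∞ → A) (b : A) : SumGeOn f g b 0 :=
  ⟨1, fun _ => b, 0, 0, Subsingleton.pairwise, by simp,
    fun _ => ⟨geOn_zero f b, geOn_zero g b, zero_le⟩⟩

theorem sum_mul_le_pfIntegral_add {μ : A → ℝ≥0∞} (hμ : IsCountablyAdditive μ)
    (h0 : μ ⊥ = 0) {f g : Set ℝ≥0∞ → A} {ι : Type*} [Fintype ι] {b : ι → A} {s : ι → ℝ≥0∞}
    (hb : Pairwise (Disjoint on b)) (hs : ∀ i, SumGeOn f g (b i) (s i)) :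
    ∑ i, μ (b i) * s i ≤ pfIntegral μ f + pfIntegral μ g := by
  choose m p u v hp hsup huv using hs
  have hp_le : ∀ i j, p i j ≤ b i := fun i j => hsup i ▸ Finset.le_sup (Finset.mem_univ j)
  have hP : Pairwise (Disjoint on fun k : (Σ i, Fin (m i)) => p k.1 k.2) := by
    rintro ⟨i, j⟩ ⟨i', j'⟩ hne
    by_cases hi : i = i'
    · subst hi
      exact hp i fun hj => hne (congrArg _ hj)
    · exact (hb hi).mono (hp_le i j) (hp_le i' j')
  calc ∑ i, μ (b i) * s i = ∑ i, ∑ j, μ (p i j) * s i := by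
        simp_rw [← Finset.sum_mul, ← hμ.measure_finset_sup h0 (hp _), hsup]
    _ ≤ ∑ i, ∑ j, (μ (p i j) * u i j + μ (p i j) * v i j) := by
        gcongr with i _ j _
        rw [← mul_add]
        gcongr
        exact (huv i j).2.2
    _ = ∑ k : Σ i, Fin (m i), μ (p k.1 k.2) * u k.1 k.2 +
          ∑ k : Σ i, Fin (m i), μ (p k.1 k.2) * v k.1 k.2 := by
        simp_rw [Fintype.sum_sigma, Finset.sum_add_distrib]
    _ ≤ pfIntegral μ f + pfIntegral μ g :=
        add_le_add (sum_mul_le_pfIntegral μ hP fun k => (huv _ _).1)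
          (sum_mul_le_pfIntegral μ hP fun k => (huv _ _).2.1)

theorem sum_mul_le_pfIntegral_add_of_isLUB {μ : A → ℝ≥0∞} (hμ : IsCountablyAdditive μ)
    (h0 : μ ⊥ = 0) {f g : Set ℝ≥0∞ → A} {ι : Type*} [Fintype ι] {a : ι → A} {s : ι → ℝ≥0∞}
    {w : ι → ℕ → A} (ha : Pairwise (Disjoint on a)) (hw : ∀ i, Monotone (w i))
    (hwa : ∀ i, IsLUB (range (w i)) (a i))
    (hs : ∀ i n, SumGeOn f g (w i n) (s i)) :
    ∑ i, μ (a i) * s i ≤ pfIntegral μ f + pfIntegral μ g := by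
  calc ∑ i, μ (a i) * s i = ⨆ n, ∑ i, μ (w i n) * s i := by
        simp_rw [hμ.measure_eq_iSup h0 (hw _) (hwa _), ENNReal.iSup_mul]
        exact ENNReal.finsetSum_iSup_of_monotone fun i _ _ hn =>
          by gcongr; exact hμ.monotone h0 (hw i hn)
    _ ≤ _ := iSup_le fun n => sum_mul_le_pfIntegral_add hμ h0
        (fun i j hij => (ha hij).mono ((hwa i).1 ⟨n, rfl⟩) ((hwa j).1 ⟨n, rfl⟩))
        fun i => hs i n

namespace ENNReal

theorem exists_add_one_div_lt {t v : ℝ≥0∞} (h : t < v) :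
    ∃ n : ℕ, t + 1 / ((n : ℝ≥0∞) + 1) < v := by
  obtain ⟨n, hn⟩ := exists_inv_nat_lt (tsub_pos_of_lt h).ne'
  refine ⟨n, lt_tsub_iff_left.1 (lt_of_le_of_lt ?_ hn)⟩
  rw [one_div]
  exact ENNReal.inv_le_inv.2 le_self_add

theorem exists_nnrat_btwn {a b : ℝ≥0∞} (h : a < b) :
    ∃ q : ℚ≥0, a < ((q : ℝ≥0) : ℝ≥0∞) ∧ ((q : ℝ≥0) : ℝ≥0∞) < b := by
  obtain ⟨q, hq0, haq, hqb⟩ := lt_iff_exists_rat_btwn.1 h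
  have hq : ((q.toNNRat : ℝ≥0) : ℝ≥0∞) = Real.toNNReal q := by
    refine congrArg _ (NNReal.coe_injective ?_)
    change ((q.toNNRat : ℝ)) = _
    rw [← Rat.cast_nnratCast, Rat.coe_toNNRat q hq0, Real.coe_toNNReal _ (Rat.cast_nonneg.2 hq0)]
  exact ⟨q.toNNRat, hq ▸ haq, hq ▸ hqb⟩

end ENNReal

noncomputable def lowerApprox (k : ℕ) (x : ℝ≥0∞) : ℝ≥0∞ :=
  min x k - ((k : ℝ≥0∞) + 1)⁻¹

theorem monotone_lowerApprox (x : ℝ≥0∞) : Monotone fun k => lowerApprox k x :=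
  fun _ _ hkl => tsub_le_tsub (min_le_min le_rfl (by exact_mod_cast hkl))
    (ENNReal.inv_le_inv.2 (by gcongr))

theorem iSup_lowerApprox (x : ℝ≥0∞) : ⨆ k, lowerApprox k x = x := by
  refine iSup_eq_of_tendsto (monotone_lowerApprox x) ?_
  have hinv : Tendsto (fun k : ℕ => ((k : ℝ≥0∞) + 1)⁻¹) atTop (𝓝 0) := by
    simpa [Function.comp_def] using
      ENNReal.tendsto_inv_nat_nhds_zero.comp (tendsto_add_atTop_nat 1)
  simpa [lowerApprox] using
    ENNReal.Tendsto.sub (tendsto_const_nhds.min ENNReal.tendsto_nat_nhds_top) hinv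
    (Or.inr ENNReal.zero_ne_top)

theorem lowerApprox_lt {x : ℝ≥0∞} (hx : x ≠ 0) (k : ℕ) : lowerApprox k x < x := by
  rcases eq_or_ne (min x k) 0 with h | h
  · simpa [lowerApprox, h] using pos_iff_ne_zero.2 hx
  · have hk : min x k ≠ ∞ := ne_top_of_le_ne_top (ENNReal.natCast_ne_top k) (min_le_right _ _)
    exact (ENNReal.sub_lt_self hk h (by simp)).trans_le (min_le_left _ _)

@[simp] theorem lowerApprox_zero (k : ℕ) : lowerApprox k 0 = 0 := by
  simp [lowerApprox]

theorem isLUB_range_sdiff {c : ℕ → A} {g b : A} (hc : IsGLB (range c) g) (hb : Disjoint b g) :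
    IsLUB (range fun n => b \ c n) b :=
  ⟨by rintro _ ⟨n, rfl⟩; exact sdiff_le, fun u hu => sdiff_eq_bot_iff.1 <|
    (hb.mono_left sdiff_le).eq_bot_of_le <| hc.2 <| by
      rintro _ ⟨n, rfl⟩
      exact sdiff_le_comm.1 (hu ⟨n, rfl⟩)⟩

theorem NNMeasFun.monotone_toFun_Iic (f : NNMeasFun A) : Monotone fun t => f.toFun (Iic t) :=
  fun s t hst => by
    rw [← inf_eq_left, ← f.map_inter _ _ measurableSet_Iic measurableSet_Iic, Iic_inter_Iic,
      inf_eq_left.2 hst]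

def IsNNRatOrTop (q : ℝ≥0∞) : Prop :=
  q = ∞ ∨ ∃ p : ℚ≥0, q = ((p : ℝ≥0) : ℝ≥0∞)

/-- The elements `{f ≤ q} ⊓ {g ≤ r}` with `q + r ≤ s`; their supremum approximates
`{f + g ≤ s}`. -/
def sumLevelSet (f g : NNMeasFun A) (s : ℝ≥0∞) : Set A :=
  {z | ∃ q r : ℝ≥0∞, IsNNRatOrTop q ∧ IsNNRatOrTop r ∧ q + r ≤ s ∧
    z = f.toFun (Iic q) ⊓ g.toFun (Iic r)}

theorem sumLevelSet_mono (f g : NNMeasFun A) : Monotone (sumLevelSet f g) :=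
  fun _ _ hss' _ ⟨q, r, hq, hr, hqr, hz⟩ => ⟨q, r, hq, hr, hqr.trans hss', hz⟩

def IsPFSum (f g h : NNMeasFun A) : Prop :=
  ∀ t : ℝ≥0∞, ∃ c : ℕ → A,
    (∀ n : ℕ, IsLUB (sumLevelSet f g (t + 1 / ((n : ℝ≥0∞) + 1))) (c n)) ∧
    IsGLB (Set.range c) (h.toFun (Set.Iic t))

variable {f g h : NNMeasFun A} {μ : A → ℝ≥0∞}

theorem IsPFSum.geOn_inf (hsum : IsPFSum f g h) {a b : A} {x y : ℝ≥0∞} (ha : GeOn f.toFun a x)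
    (hb : GeOn g.toFun b y) : GeOn h.toFun (a ⊓ b) (x + y) := by
  intro t ht
  obtain ⟨c, hc, hh⟩ := hsum t
  obtain ⟨n, hn⟩ := ENNReal.exists_add_one_div_lt ht
  refine (le_compl_iff_disjoint_left.1 ((hc n).2 ?_)).mono_right (hh.1 ⟨n, rfl⟩)
  rintro _ ⟨q, r, -, -, hqr, rfl⟩
  refine le_compl_iff_disjoint_left.2 ?_
  rcases lt_or_ge q x with hq | hq
  · exact (ha q hq).mono inf_le_left inf_le_left
  · have hr : r < y := lt_of_not_ge fun hr => ((add_le_add hq hr).trans hqr).not_gt hn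
    exact (hb r hr).mono inf_le_right inf_le_right

theorem IsPFSum.add_le_pfIntegral (hsum : IsPFSum f g h) (hμ : IsCountablyAdditive μ)
    (h0 : μ ⊥ = 0) :
    pfIntegral μ f.toFun + pfIntegral μ g.toFun ≤ pfIntegral μ h.toFun := by
  refine ENNReal.biSup_add_biSup_le' (SimpleData.exists_isBelow _) (SimpleData.exists_isBelow _)
    fun d hd e he => ?_
  have hpair : Pairwise (Disjoint on fun p : Fin d.m × Fin e.m => d.a p.1 ⊓ e.a p.2) := by
    rintro ⟨i, j⟩ ⟨i', j'⟩ hne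
    by_cases hi : i = i'
    · subst hi
      exact (e.pairwise_disjoint fun hj => hne (congrArg _ hj)).mono inf_le_right inf_le_right
    · exact (d.pairwise_disjoint hi).mono inf_le_left inf_le_left
  calc d.integral μ + e.integral μ
      = ∑ p : Fin d.m × Fin e.m, μ (d.a p.1 ⊓ e.a p.2) * (d.x p.1 + e.x p.2) := by
        simp_rw [mul_add, Finset.sum_add_distrib, Fintype.sum_prod_type]
        rw [Finset.sum_comm (f := fun i j => μ (d.a i ⊓ e.a j) * e.x j)]
        simp_rw [← Finset.sum_mul, e.sum_measure_inf hμ h0, inf_comm (d.a _),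
          d.sum_measure_inf hμ h0]
        rfl
    _ ≤ pfIntegral μ h.toFun :=
        sum_mul_le_pfIntegral μ hpair fun p =>
          hsum.geOn_inf ((d.isBelow_iff _).1 hd p.1) ((e.isBelow_iff _).1 he p.2)

theorem geOn_sub_of_disjoint_upperBound {b c : A} {q s : ℝ≥0∞} (hq : IsNNRatOrTop q)
    (hc : c ∈ upperBounds (sumLevelSet f g s)) (hb : Disjoint b c) :
    GeOn g.toFun (b ⊓ f.toFun (Iic q)) (s - q) := by
  intro r hr
  obtain ⟨r', hrr', hr'⟩ := ENNReal.exists_nnrat_btwn hr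
  have hmem : f.toFun (Iic q) ⊓ g.toFun (Iic r') ∈ sumLevelSet f g s :=
    ⟨q, r', hq, Or.inr ⟨r', rfl⟩, (lt_tsub_iff_left.1 hr').le, rfl⟩
  have : Disjoint (b ⊓ f.toFun (Iic q)) (g.toFun (Iic r')) := by
    rw [disjoint_iff, inf_assoc]
    exact (hb.mono_right (hc hmem)).eq_bot
  exact this.mono_right (g.monotone_toFun_Iic hrr'.le)

theorem sumGeOn_of_disjoint_upperBound {b c : A} {t ε : ℝ≥0∞} (ht : t ≠ ∞)
    (hε : 0 < ε) (hε_top : ε ≠ ∞) (hc : c ∈ upperBounds (sumLevelSet f g (t + ε)))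
    (hb : Disjoint b c) : SumGeOn f.toFun g.toFun b t := by
  obtain ⟨p, hδ, hδε⟩ := ENNReal.exists_nnrat_btwn hε
  set δ : ℝ≥0∞ := ((p : ℝ≥0) : ℝ≥0∞)
  obtain ⟨N, hN⟩ := ENNReal.exists_nat_mul_gt hδ.ne' (ENNReal.add_ne_top.2 ⟨ht, hε_top⟩)
  let q : ℕ → ℝ≥0∞ := fun j => (((j * p : ℚ≥0) : ℝ≥0) : ℝ≥0∞)
  have hq : ∀ j, q j = j * δ := fun j => by simp [q, δ]
  -- the level sets `{f ≤ j δ}` for `j < N`, closed off by `{f ≤ ∞} = ⊤`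
  let L : Fin (N + 1) → ℝ≥0∞ := fun j => if (j : ℕ) < N then q j else ∞
  let F : Fin (N + 1) → A := fun j => f.toFun (Iic (L j))
  have ht_le : t ≤ t + ε - δ :=
    ENNReal.le_sub_of_add_le_right ENNReal.coe_ne_top (add_le_add le_rfl hδε.le)
  refine ⟨N + 1, fun j => b ⊓ disjointed F j, fun j => q j - δ, fun j => t + ε - L j,
    fun i j hij => (disjoint_disjointed F hij).mono inf_le_right inf_le_right, ?_,
    fun j => ⟨?_, ?_, ?_⟩⟩
  · rw [← Finset.sup_inf_distrib_left, Fintype.sup_disjointed, inf_eq_left]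
    refine le_top.trans (Finset.le_sup_of_le (Finset.mem_univ (Fin.last N)) ?_)
    simp [F, L, f.map_univ]
  · intro s hs
    dsimp only at hs
    obtain ⟨k, hk⟩ : ∃ k, (j : ℕ) = k + 1 :=
      Nat.exists_eq_succ_of_ne_zero fun h0 => by simp [h0, q] at hs
    let k' : Fin (N + 1) := ⟨k, by omega⟩
    have hs' : s ≤ L k' := by
      simp only [L, k', show k < N by omega, if_true]
      rw [hq, hk, Nat.cast_succ, add_mul, one_mul,
        ENNReal.add_sub_cancel_right ENNReal.coe_ne_top] at hs
      exact (hq k).symm ▸ hs.le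
    refine ((disjoint_sdiff_self_left.mono_right ?_).mono_right
      (f.monotone_toFun_Iic hs')).mono_left inf_le_right
    exact Finset.le_sup (f := F) (Finset.mem_Iio.2 (Fin.lt_def.2 (by simp [k', hk])))
  · have hL : IsNNRatOrTop (L j) := by
      simp only [L, IsNNRatOrTop]
      split_ifs
      exacts [Or.inr ⟨_, rfl⟩, Or.inl rfl]
    exact (geOn_sub_of_disjoint_upperBound hL hc hb).anti
      (inf_le_inf_left b (disjointed_le F j))
  · by_cases hj : (j : ℕ) < N
    · calc t ≤ t + ε - δ := ht_le
        _ ≤ (t + ε - q j) + (q j - δ) := tsub_le_tsub_add_tsub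
        _ = (q j - δ) + (t + ε - L j) := by simp [L, hj, add_comm]
    · have hjN : (j : ℕ) = N := by omega
      calc t ≤ t + ε - δ := ht_le
        _ ≤ q j - δ := tsub_le_tsub_right (by rw [hq, hjN]; exact hN.le) _
        _ = (q j - δ) + (t + ε - L j) := by simp [L, hj]

theorem IsPFSum.exists_sumGeOn_of_lt (hsum : IsPFSum f g h) {b : A} {x t : ℝ≥0∞}
    (hb : GeOn h.toFun b x) (ht : t < x) :
    ∃ w : ℕ → A, Monotone w ∧ IsLUB (range w) b ∧
      ∀ n, SumGeOn f.toFun g.toFun (w n) t := by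
  obtain ⟨c, hc, hh⟩ := hsum t
  have hanti : Antitone c := fun n n' hn => (hc n').mono (hc n) (sumLevelSet_mono f g (by gcongr))
  exact ⟨fun n => b \ c n, fun n n' hn => sdiff_le_sdiff_left (hanti hn),
    isLUB_range_sdiff hh (hb t ht), fun n => sumGeOn_of_disjoint_upperBound ht.ne_top
      (by simp) (by simp) (hc n).1 disjoint_sdiff_self_left⟩

theorem IsPFSum.pfIntegral_le_add (hsum : IsPFSum f g h) (hμ : IsCountablyAdditive μ)
    (h0 : μ ⊥ = 0) :
    pfIntegral μ h.toFun ≤ pfIntegral μ f.toFun + pfIntegral μ g.toFun := by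
  refine iSup₂_le fun d hd => ?_
  calc d.integral μ = ⨆ k, ∑ i, μ (d.a i) * lowerApprox k (d.x i) := by
        simp_rw [SimpleData.integral]
        conv_lhs => enter [2, i]; rw [← iSup_lowerApprox (d.x i), ENNReal.mul_iSup]
        exact ENNReal.finsetSum_iSup_of_monotone fun i _ _ hk =>
          by gcongr; exact monotone_lowerApprox _ hk
    _ ≤ _ := iSup_le fun k => ?_
  have hw : ∀ i, ∃ w : ℕ → A, Monotone w ∧ IsLUB (range w) (d.a i) ∧
      ∀ n, SumGeOn f.toFun g.toFun (w n) (lowerApprox k (d.x i)) := by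
    intro i
    rcases eq_or_ne (d.x i) 0 with hx | hx
    · exact ⟨fun _ => d.a i, monotone_const, by simp [isLUB_singleton],
        fun _ => by simpa [hx] using sumGeOn_zero f.toFun g.toFun (d.a i)⟩
    · exact hsum.exists_sumGeOn_of_lt ((d.isBelow_iff _).1 hd i) (lowerApprox_lt hx k)
  choose w hw_mono hw_lub hw_sum using hw
  exact sum_mul_le_pfIntegral_add_of_isLUB hμ h0 d.pairwise_disjoint hw_mono hw_lub hw_sum

end

theorem pfIntegral_add_general {A : Type*} [BooleanAlgebra A]
    (μ : A → ℝ≥0∞) (h0 : μ ⊥ = 0)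
    (hμ : ∀ a : ℕ → A, (∀ i j, i ≠ j → a i ⊓ a j = ⊥) →
      ∀ s, IsLUB (Set.range a) s → μ s = ∑' n, μ (a n))
    (f g h : NNMeasFun A)
    (hsum : ∀ t : ℝ≥0∞, ∃ c : ℕ → A,
      (∀ n : ℕ, IsLUB {z : A | ∃ q r : ℝ≥0∞,
          (q = ∞ ∨ ∃ p : ℚ≥0, q = ((p : ℝ≥0) : ℝ≥0∞)) ∧
          (r = ∞ ∨ ∃ p : ℚ≥0, r = ((p : ℝ≥0) : ℝ≥0∞)) ∧
          q + r ≤ t + 1 / ((n : ℝ≥0∞) + 1) ∧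
          z = f.toFun (Set.Iic q) ⊓ g.toFun (Set.Iic r)} (c n)) ∧
        IsGLB (Set.range c) (h.toFun (Set.Iic t))) :
    pfIntegral μ h.toFun = pfIntegral μ f.toFun + pfIntegral μ g.toFun :=
  le_antisymm (IsPFSum.pfIntegral_le_add hsum hμ h0) (IsPFSum.add_le_pfIntegral hsum hμ h0)

/-- Additivity of the point-free integral: if `h = f + g` in the point-free
sense, then `∫ h dμ = ∫ f dμ + ∫ g dμ`. -/
theorem pfIntegral_add {A : Type*} [BooleanAlgebra A]
    (hA : ∀ a : ℕ → A, ∃ s, IsLUB (Set.range a) s)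
    (μ : A → ℝ≥0∞) (h0 : μ ⊥ = 0)
    (hμ : ∀ a : ℕ → A, (∀ i j, i ≠ j → a i ⊓ a j = ⊥) →
      ∀ s, IsLUB (Set.range a) s → μ s = ∑' n, μ (a n))
    (f g h : NNMeasFun A)
    (hsum : ∀ t : ℝ≥0∞, ∃ c : ℕ → A,
      (∀ n : ℕ, IsLUB {z : A | ∃ q r : ℝ≥0∞,
          (q = ∞ ∨ ∃ p : ℚ≥0, q = ((p : ℝ≥0) : ℝ≥0∞)) ∧
          (r = ∞ ∨ ∃ p : ℚ≥0, r = ((p : ℝ≥0) : ℝ≥0∞)) ∧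
          q + r ≤ t + 1 / ((n : ℝ≥0∞) + 1) ∧
          z = f.toFun (Set.Iic q) ⊓ g.toFun (Set.Iic r)} (c n)) ∧
        IsGLB (Set.range c) (h.toFun (Set.Iic t))) :
    pfIntegral μ h.toFun = pfIntegral μ f.toFun + pfIntegral μ g.toFun :=
  pfIntegral_add_general μ h0 hμ f g h hsum
end

section
/- Let B be a Boolean algebra, C an abstract σ-algebra, and η : B → C a Boolean algebra homomorphism which is universal among Boolean homomorphisms from B into abstract σ-algebras: for every abstract σ-algebra D (in a fixed universe) and every Boolean algebra homomorphism f : B → D there exists a unique σ-morphism g : C → D with g ∘ η = f (so C is the free abstract σ-algebra CB(B) on B). Then for every additive function μ₀ : B → ℝ≥0∞ with values in [0,1] there exists a unique measure μ : C → ℝ≥0∞ with μ ∘ η = μ₀; moreover μ takes values in [0,1]. -/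
/-!
The extension is the Carathéodory extension of the outer measure
`x ↦ inf { ∑ μ₀ bₙ | x is covered by the ηbₙ }`.

Two features of the free σ-algebra make this work. First, a compactness property: if `η b` is
covered by countably many `η bₙ`, then `b` is already covered by finitely many `bₙ`, since
otherwise the prime ideal theorem gives a two-valued homomorphism on `B` separating `b` from
all `bₙ`, whose σ-extension to `C` (a two-valued measure) contradicts the cover. Hence the
outer measure agrees with `μ₀` on the image of `η`. Second, an induction principle: every
λ-system containing the image of `η` is all of `C`, since by Dynkin's argument the least such
λ-system is a sub-σ-algebra, onto which the universal property retracts `C`. This shows that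
every element is Carathéodory-measurable, and that two finite measures extending `μ₀` agree.
-/

open scoped ENNReal

/-- An abstract σ-algebra: a Boolean algebra in which every `ℕ`-indexed family
has a least upper bound. -/
def IsAbstractSigmaAlgebra (A : Type*) [BooleanAlgebra A] : Prop :=
  ∀ a : ℕ → A, ∃ s, IsLUB (Set.range a) s

/-- A homomorphism of Boolean algebras. -/
def IsBoolHom {A B : Type*} [BooleanAlgebra A] [BooleanAlgebra B] (f : A → B) : Prop :=
  f ⊥ = ⊥ ∧ f ⊤ = ⊤ ∧ (∀ a b, f (a ⊓ b) = f a ⊓ f b) ∧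
    (∀ a b, f (a ⊔ b) = f a ⊔ f b) ∧ ∀ a, f aᶜ = (f a)ᶜ

/-- A σ-morphism of abstract σ-algebras: a Boolean homomorphism sending least
upper bounds of `ℕ`-indexed families to least upper bounds. -/
def IsSigmaMorphism {A B : Type*} [BooleanAlgebra A] [BooleanAlgebra B] (f : A → B) : Prop :=
  IsBoolHom f ∧ ∀ (a : ℕ → A) (s : A), IsLUB (Set.range a) s →
    IsLUB (Set.range fun n => f (a n)) (f s)

/-- A measure on an abstract σ-algebra. -/
def IsMeasureOn {A : Type*} [BooleanAlgebra A] (μ : A → ℝ≥0∞) : Prop :=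
  μ ⊥ = 0 ∧ ∀ a : ℕ → A, (∀ i j, i ≠ j → a i ⊓ a j = ⊥) →
    ∀ s, IsLUB (Set.range a) s → μ s = ∑' n, μ (a n)

universe u v

open Set

section BooleanHom

variable {A A' A'' : Type*} [BooleanAlgebra A] [BooleanAlgebra A'] [BooleanAlgebra A'']
  {f : A → A'}

lemma IsBoolHom.map_bot (hf : IsBoolHom f) : f ⊥ = ⊥ := hf.1

lemma IsBoolHom.map_top (hf : IsBoolHom f) : f ⊤ = ⊤ := hf.2.1

lemma IsBoolHom.map_inf (hf : IsBoolHom f) (a b : A) : f (a ⊓ b) = f a ⊓ f b := hf.2.2.1 a b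

lemma IsBoolHom.map_sup (hf : IsBoolHom f) (a b : A) : f (a ⊔ b) = f a ⊔ f b := hf.2.2.2.1 a b

lemma IsBoolHom.map_compl (hf : IsBoolHom f) (a : A) : f aᶜ = (f a)ᶜ := hf.2.2.2.2 a

lemma BoundedLatticeHom.isBoolHom (g : BoundedLatticeHom A A') : IsBoolHom g :=
  ⟨map_bot g, map_top g, map_inf g, map_sup g, map_compl' g⟩

lemma IsBoolHom.monotone (hf : IsBoolHom f) : Monotone f := fun a b hab => by
  simpa [← hf.map_sup, sup_eq_right.2 hab] using le_sup_left (a := f a) (b := f b)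

lemma IsBoolHom.comp {g : A' → A''} (hg : IsBoolHom g) (hf : IsBoolHom f) : IsBoolHom (g ∘ f) :=
  ⟨by simp [hf.map_bot, hg.map_bot], by simp [hf.map_top, hg.map_top],
    fun a b => by simp [hf.map_inf, hg.map_inf], fun a b => by simp [hf.map_sup, hg.map_sup],
    fun a => by simp [hf.map_compl, hg.map_compl]⟩

lemma isSigmaMorphism_id : IsSigmaMorphism (id : A → A) :=
  ⟨(BoundedLatticeHom.id A).isBoolHom, fun _ _ hs => hs⟩

lemma IsSigmaMorphism.comp {g : A' → A''} (hg : IsSigmaMorphism g) (hf : IsSigmaMorphism f) :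
    IsSigmaMorphism (g ∘ f) :=
  ⟨hg.1.comp hf.1, fun a s hs => hg.2 _ _ (hf.2 a s hs)⟩

lemma isAbstractSigmaAlgebra_of_completeBooleanAlgebra {A : Type*} [CompleteBooleanAlgebra A] :
    IsAbstractSigmaAlgebra A :=
  fun a => ⟨⨆ n, a n, isLUB_iSup⟩

end BooleanHom

section LeastUpperBounds

lemma inf_mem_lowerBounds_upperBounds_range {A ι : Type*} [GeneralizedHeytingAlgebra A]
    {a : ι → A} {x : A} (hx : x ∈ lowerBounds (upperBounds (range a))) (c : A) :
    c ⊓ x ∈ lowerBounds (upperBounds (range fun i => c ⊓ a i)) := fun u hu => by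
  have hxu : x ≤ c ⇨ u :=
    hx <| forall_mem_range.2 fun i => le_himp_iff.2 (inf_comm c (a i) ▸ hu (mem_range_self i))
  exact inf_comm x c ▸ le_himp_iff.1 hxu

lemma IsLUB.inf_left {A ι : Type*} [GeneralizedHeytingAlgebra A] {a : ι → A} {s : A}
    (hs : IsLUB (range a) s) (c : A) : IsLUB (range fun i => c ⊓ a i) (c ⊓ s) :=
  ⟨forall_mem_range.2 fun i => inf_le_inf_left c (hs.1 (mem_range_self i)),
    inf_mem_lowerBounds_upperBounds_range hs.2 c⟩

variable {A : Type*}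

def pairSeq [Bot A] (x y : A) : ℕ → A
  | 0 => x
  | 1 => y
  | _ + 2 => ⊥

lemma isLUB_range_pairSeq [SemilatticeSup A] [OrderBot A] (x y : A) :
    IsLUB (range (pairSeq x y)) (x ⊔ y) := by
  refine ⟨forall_mem_range.2 fun n => ?_, fun u hu => sup_le (hu (mem_range_self 0))
    (hu (mem_range_self 1))⟩
  rcases n with _ | _ | n
  exacts [le_sup_left, le_sup_right, bot_le]

lemma pairSeq_inf_pairSeq_eq_bot [Lattice A] [OrderBot A] {x y : A} (h : x ⊓ y = ⊥) :
    ∀ i j, i ≠ j → pairSeq x y i ⊓ pairSeq x y j = ⊥ := by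
  rintro (_ | _ | i) (_ | _ | j) hij <;> simp_all [pairSeq, inf_comm]

lemma tsum_pairSeq [Bot A] {m : A → ℝ≥0∞} (hm : m ⊥ = 0) (x y : A) :
    ∑' n, m (pairSeq x y n) = m x + m y := by
  rw [tsum_eq_sum (s := {0, 1}) fun n hn => ?_, Finset.sum_pair zero_ne_one]
  · rfl
  · rcases n with _ | _ | n
    · simp at hn
    · simp at hn
    · exact hm

end LeastUpperBounds

section Additive

variable {A : Type*} [BooleanAlgebra A] {μ : A → ℝ≥0∞}

lemma IsMeasureOn.map_sup (hμ : IsMeasureOn μ) {x y : A} (h : x ⊓ y = ⊥) :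
    μ (x ⊔ y) = μ x + μ y := by
  rw [hμ.2 _ (pairSeq_inf_pairSeq_eq_bot h) _ (isLUB_range_pairSeq x y), tsum_pairSeq hμ.1]

lemma monotone_of_additive (hadd : ∀ a b : A, a ⊓ b = ⊥ → μ (a ⊔ b) = μ a + μ b) :
    Monotone μ := fun x y hxy =>
  calc μ x ≤ μ x + μ (y \ x) := le_self_add
    _ = μ y := by rw [← hadd _ _ disjoint_sdiff_self_right.eq_bot, sup_sdiff_cancel_right hxy]

lemma map_sup_le_add_of_additive (hadd : ∀ a b : A, a ⊓ b = ⊥ → μ (a ⊔ b) = μ a + μ b)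
    (x y : A) : μ (x ⊔ y) ≤ μ x + μ y :=
  calc μ (x ⊔ y) = μ x + μ (y \ x) := by
        rw [← hadd _ _ disjoint_sdiff_self_right.eq_bot, sup_sdiff_self_right]
    _ ≤ μ x + μ y := add_le_add_right (monotone_of_additive hadd sdiff_le) _

lemma map_finset_sup_le_sum_of_additive {ι : Type*} (h0 : μ ⊥ = 0)
    (hadd : ∀ a b : A, a ⊓ b = ⊥ → μ (a ⊔ b) = μ a + μ b) (s : Finset ι) (f : ι → A) :
    μ (s.sup f) ≤ ∑ i ∈ s, μ (f i) := by
  classical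
  induction s using Finset.induction with
  | empty => simp [h0]
  | insert i s hi ih =>
    rw [Finset.sup_insert, Finset.sum_insert hi]
    exact (map_sup_le_add_of_additive hadd _ _).trans (add_le_add_right ih _)

end Additive

section LambdaSystem

variable {A : Type*} [BooleanAlgebra A] {L P : Set A} {x y : A}

structure IsLambdaSystem (L : Set A) : Prop where
  top_mem : ⊤ ∈ L
  compl_mem {x : A} : x ∈ L → xᶜ ∈ L
  isLUB_mem {a : ℕ → A} : (∀ n, a n ∈ L) → (∀ i j, i ≠ j → a i ⊓ a j = ⊥) →
    ∀ {s}, IsLUB (range a) s → s ∈ L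

namespace IsLambdaSystem

lemma bot_mem (hL : IsLambdaSystem L) : ⊥ ∈ L := compl_top (α := A) ▸ hL.compl_mem hL.top_mem

lemma sup_mem (hL : IsLambdaSystem L) (hx : x ∈ L) (hy : y ∈ L) (h : x ⊓ y = ⊥) : x ⊔ y ∈ L :=
  hL.isLUB_mem (by rintro (_ | _ | n) <;> simp [pairSeq, hx, hy, hL.bot_mem])
    (pairSeq_inf_pairSeq_eq_bot h) (isLUB_range_pairSeq x y)

lemma inf_left (hL : IsLambdaSystem L) (hy : y ∈ L) : IsLambdaSystem {x | y ⊓ x ∈ L} where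
  top_mem := by simpa using hy
  compl_mem {x} hx := by
    have hdisj : yᶜ ⊓ (y ⊓ x) = ⊥ := by rw [← inf_assoc, compl_inf_eq_bot, bot_inf_eq]
    have hyx : y ⊓ xᶜ = (yᶜ ⊔ y ⊓ x)ᶜ := by
      rw [compl_sup, compl_compl, compl_inf, inf_sup_left, inf_compl_eq_bot, bot_sup_eq]
    show y ⊓ xᶜ ∈ L
    rw [hyx]
    exact hL.compl_mem (hL.sup_mem (hL.compl_mem hy) hx hdisj)
  isLUB_mem {a} ha hd s hs :=
    hL.isLUB_mem ha (fun i j hij => by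
      rw [inf_inf_inf_comm, inf_idem, hd i j hij, inf_bot_eq]) (hs.inf_left y)

def toBooleanSubalgebra (hL : IsLambdaSystem L) (hinf : InfClosed L) : BooleanSubalgebra A where
  carrier := L
  supClosed' x hx y hy := by
    simpa using hL.compl_mem (hinf (hL.compl_mem hx) (hL.compl_mem hy))
  infClosed' := hinf
  compl_mem' := hL.compl_mem
  bot_mem' := hL.bot_mem

/-- Disjointifying a sequence does not change its upper bounds. -/
lemma isLUB_mem_of_infClosed (hL : IsLambdaSystem L) (hinf : InfClosed L) {a : ℕ → A}
    (ha : ∀ n, a n ∈ L) {s : A} (hs : IsLUB (range a) s) : s ∈ L := by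
  have hmem : ∀ n, disjointed a n ∈ L := fun n =>
    disjointedRec (p := (· ∈ hL.toBooleanSubalgebra hinf))
      (fun _ i ht => BooleanSubalgebra.sdiff_mem ht (ha i)) (ha n)
  have hub : upperBounds (range (disjointed a)) = upperBounds (range a) := by
    rw [← upperBounds_range_partialSups, partialSups_disjointed, upperBounds_range_partialSups]
  exact hL.isLUB_mem hmem (fun i j hij => (disjoint_disjointed a hij).eq_bot)
    (by rwa [IsLUB, hub])

end IsLambdaSystem

def lambdaClosure (P : Set A) : Set A := ⋂₀ {L | IsLambdaSystem L ∧ P ⊆ L}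

lemma isLambdaSystem_lambdaClosure (P : Set A) : IsLambdaSystem (lambdaClosure P) where
  top_mem _ hL := hL.1.top_mem
  compl_mem hx L hL := hL.1.compl_mem (hx L hL)
  isLUB_mem ha hd _ hs L hL := hL.1.isLUB_mem (fun n => ha n L hL) hd hs

lemma subset_lambdaClosure : P ⊆ lambdaClosure P := fun _ hx _ hL => hL.2 hx

lemma lambdaClosure_subset (hL : IsLambdaSystem L) (hPL : P ⊆ L) : lambdaClosure P ⊆ L :=
  fun _ hx => hx L ⟨hL, hPL⟩

/-- Dynkin's π-λ argument. -/
lemma infClosed_lambdaClosure (hP : InfClosed P) : InfClosed (lambdaClosure P) := by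
  have hΛ := isLambdaSystem_lambdaClosure P
  have hPinf : ∀ p ∈ P, lambdaClosure P ⊆ {x | p ⊓ x ∈ lambdaClosure P} := fun p hp =>
    lambdaClosure_subset (hΛ.inf_left (subset_lambdaClosure hp))
      fun q hq => subset_lambdaClosure (hP hp hq)
  intro x hx y hy
  refine lambdaClosure_subset (hΛ.inf_left hx) (fun p hp => ?_) hy
  show x ⊓ p ∈ lambdaClosure P
  rw [inf_comm]
  exact hPinf p hp hx

end LambdaSystem

section FreeSigmaAlgebra

/-- `η` exhibits `C` as the free abstract σ-algebra `CB(B)` on `B`. -/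
def IsSigmaUniversal {B : Type u} {C : Type v} [BooleanAlgebra B] [BooleanAlgebra C]
    (η : B → C) : Prop :=
  ∀ (D : Type v) [BooleanAlgebra D], IsAbstractSigmaAlgebra D →
    ∀ f : B → D, IsBoolHom f → ∃! g : C → D, IsSigmaMorphism g ∧ g ∘ η = f

def finsetSupIdeal {A ι : Type*} [SemilatticeSup A] [OrderBot A] (f : ι → A) :
    Order.Ideal A where
  carrier := {a | ∃ s : Finset ι, a ≤ s.sup f}
  lower' _ _ hab := fun ⟨s, hs⟩ => ⟨s, hab.trans hs⟩
  nonempty' := ⟨⊥, ∅, bot_le⟩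
  directed' := by
    classical
    rintro a ⟨s, hs⟩ b ⟨t, ht⟩
    exact ⟨a ⊔ b, ⟨s ∪ t, by rw [Finset.sup_union]; exact sup_le_sup hs ht⟩,
      le_sup_left, le_sup_right⟩

lemma isBoolHom_setOf_notMem {A : Type*} [BooleanAlgebra A] {J : Order.Ideal A}
    (hJ : J.IsPrime) (X : Type*) : IsBoolHom fun a : A => {_x : X | a ∉ J} := by
  have hcompl : ∀ a, aᶜ ∈ J ↔ a ∉ J := fun a =>
    ⟨fun hac ha => hJ.toIsProper.top_notMem (sup_compl_eq_top (x := a) ▸ J.sup_mem ha hac),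
      fun ha => hJ.mem_or_compl_mem.resolve_left ha⟩
  refine ⟨?_, ?_, fun a b => ?_, fun a b => ?_, fun a => ?_⟩ <;> ext
  · simp [J.bot_mem]
  · simp [hJ.toIsProper.top_notMem]
  · exact ⟨fun h => ⟨fun ha => h (J.lower inf_le_left ha), fun hb => h (J.lower inf_le_right hb)⟩,
      fun ⟨ha, hb⟩ h => (hJ.mem_or_mem h).elim ha hb⟩
  · exact Order.Ideal.sup_mem_iff.not.trans not_and_or
  · simp [hcompl]

variable {B C : Type*} [BooleanAlgebra B] [BooleanAlgebra C] {η : B → C}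

/-- Evaluating the σ-extension of a two-valued homomorphism (obtained from a prime ideal)
rules out infinite covers that have no finite subcover. -/
theorem IsSigmaUniversal.exists_finset_le_sup (hfree : IsSigmaUniversal η) {b : B}
    {bs : ℕ → B} {s : C} (hs : IsLUB (range (η ∘ bs)) s) (hbs : η b ≤ s) :
    ∃ F : Finset ℕ, b ≤ F.sup bs := by
  by_contra! hb
  have hdisj : Disjoint (Order.PFilter.principal b : Set B) (finsetSupIdeal bs) :=
    Set.disjoint_left.2 fun a hba ⟨F, hF⟩ => hb F ((Order.PFilter.mem_principal.1 hba).trans hF)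
  obtain ⟨J, hJ, hIJ, hJb⟩ := DistribLattice.prime_ideal_of_disjoint_filter_ideal hdisj
  have hbJ : b ∉ J := Set.disjoint_left.1 hJb (Order.PFilter.mem_principal.2 le_rfl)
  have hbsJ : ∀ n, bs n ∈ J := fun n => hIJ ⟨{n}, by simp⟩
  obtain ⟨g, ⟨hg, hgη⟩, -⟩ := hfree (Set PUnit)
    isAbstractSigmaAlgebra_of_completeBooleanAlgebra _ (isBoolHom_setOf_notMem hJ PUnit)
  have hgη' : ∀ a, g (η a) = {_x | a ∉ J} := congrFun hgη
  have hgs : g s ≤ ∅ := (hg.2 _ s hs).2 <| forall_mem_range.2 fun n => by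
    simp [hgη', hbsJ n]
  have hgb : g (η b) = univ := by simp [hgη', hbJ]
  exact (hgb ▸ (hg.1.monotone hbs).trans hgs) (mem_univ PUnit.unit)

theorem IsSigmaUniversal.mem_of_isLUB_mem (hfree : IsSigmaUniversal η)
    (hC : IsAbstractSigmaAlgebra C) (hη : IsBoolHom η) (L : BooleanSubalgebra C)
    (hηL : ∀ b, η b ∈ L)
    (hL : ∀ a : ℕ → C, (∀ n, a n ∈ L) → ∀ s, IsLUB (range a) s → s ∈ L) (x : C) : x ∈ L := by
  have hlub : ∀ (a : ℕ → L) (s : C) (hs : IsLUB (range fun n => (a n : C)) s),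
      IsLUB (range a) ⟨s, hL _ (fun n => (a n).2) s hs⟩ := fun a s hs =>
    IsLUB.of_image Subtype.coe_le_coe (by rwa [← range_comp])
  have hLσ : IsAbstractSigmaAlgebra L := fun a =>
    let ⟨s, hs⟩ := hC fun n => (a n : C)
    ⟨_, hlub a s hs⟩
  have hval : IsSigmaMorphism ((↑) : L → C) := by
    refine ⟨L.subtype.isBoolHom, fun a s' hs' => ?_⟩
    obtain ⟨s, hs⟩ := hC fun n => (a n : C)
    exact (congrArg Subtype.val (hs'.unique (hlub a s hs))).symm ▸ hs
  have hη' : IsBoolHom fun b => (⟨η b, hηL b⟩ : L) :=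
    ⟨Subtype.ext hη.map_bot, Subtype.ext hη.map_top, fun a b => Subtype.ext (hη.map_inf a b),
      fun a b => Subtype.ext (hη.map_sup a b), fun a => Subtype.ext (hη.map_compl a)⟩
  obtain ⟨g, ⟨hg, hgη⟩, -⟩ := hfree L hLσ _ hη'
  obtain ⟨G, -, hG⟩ := hfree C hC η hη
  have hretract : Subtype.val ∘ g = id :=
    (hG _ ⟨hval.comp hg, by rw [Function.comp_assoc, hgη]; rfl⟩).trans
      (hG id ⟨isSigmaMorphism_id, rfl⟩).symm
  have hgx : (g x : C) = x := congrFun hretract x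
  exact hgx ▸ (g x).2

theorem IsSigmaUniversal.forall_mem_of_isLambdaSystem (hfree : IsSigmaUniversal η)
    (hC : IsAbstractSigmaAlgebra C) (hη : IsBoolHom η) {L : Set C} (hL : IsLambdaSystem L)
    (hηL : ∀ b, η b ∈ L) (x : C) : x ∈ L := by
  have hΛ := isLambdaSystem_lambdaClosure (range η)
  have hinf : InfClosed (lambdaClosure (range η)) := infClosed_lambdaClosure <| by
    rintro _ ⟨a, rfl⟩ _ ⟨b, rfl⟩
    exact ⟨a ⊓ b, hη.map_inf a b⟩
  refine lambdaClosure_subset hL (range_subset_iff.2 hηL) ?_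
  exact hfree.mem_of_isLUB_mem hC hη (hΛ.toBooleanSubalgebra hinf)
    (fun b => subset_lambdaClosure (mem_range_self b))
    (fun a ha s hs => hΛ.isLUB_mem_of_infClosed hinf ha hs) x

end FreeSigmaAlgebra

section OuterMeasure

variable {A : Type*} [BooleanAlgebra A] {m : A → ℝ≥0∞}

structure IsOuterMeasureOn (m : A → ℝ≥0∞) : Prop where
  map_bot : m ⊥ = 0
  le_tsum {a : ℕ → A} {x : A} : x ∈ lowerBounds (upperBounds (range a)) →
    m x ≤ ∑' n, m (a n)

lemma IsOuterMeasureOn.mono (hm : IsOuterMeasureOn m) : Monotone m := fun x y hxy =>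
  calc m x ≤ ∑' n, m (pairSeq y ⊥ n) := hm.le_tsum fun _ hu => hxy.trans (hu (mem_range_self 0))
    _ = m y := by rw [tsum_pairSeq hm.map_bot, hm.map_bot, add_zero]

def IsCaratheodory (m : A → ℝ≥0∞) (c : A) : Prop := ∀ x, m (x ⊓ c) + m (x ⊓ cᶜ) ≤ m x

lemma sum_range_inf_add_le_of_isCaratheodory {c : ℕ → A} (hc : ∀ n, IsCaratheodory m (c n))
    (hd : ∀ i j, i ≠ j → c i ⊓ c j = ⊥) (x : A) (N : ℕ) :
    ∑ n ∈ Finset.range N, m (x ⊓ c n) + m (x ⊓ ((Finset.range N).sup c)ᶜ) ≤ m x := by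
  induction N with
  | zero => simp
  | succ N ih =>
    have hcN : c N ≤ ((Finset.range N).sup c)ᶜ := le_compl_iff_disjoint_right.2 <|
      Finset.disjoint_sup_right.2 fun k hk => disjoint_iff.2 (hd N k (Finset.mem_range.1 hk).ne')
    have hstep := hc N (x ⊓ ((Finset.range N).sup c)ᶜ)
    rw [inf_assoc, inf_eq_right.2 hcN, inf_assoc, ← compl_sup, sup_comm, ← Finset.sup_insert,
      ← Finset.range_add_one] at hstep
    rw [Finset.sum_range_succ, add_assoc]
    exact (add_le_add_right hstep _).trans ih

lemma IsOuterMeasureOn.tsum_inf_add_le_of_isCaratheodory (hm : IsOuterMeasureOn m) {c : ℕ → A}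
    (hc : ∀ n, IsCaratheodory m (c n)) (hd : ∀ i j, i ≠ j → c i ⊓ c j = ⊥) {s : A}
    (hs : IsLUB (range c) s) (x : A) : ∑' n, m (x ⊓ c n) + m (x ⊓ sᶜ) ≤ m x := by
  rw [ENNReal.tsum_eq_iSup_nat, ENNReal.iSup_add]
  refine iSup_le fun N => le_trans ?_ (sum_range_inf_add_le_of_isCaratheodory hc hd x N)
  refine add_le_add_right (hm.mono (inf_le_inf_left x (compl_le_compl ?_))) _
  exact Finset.sup_le fun k _ => hs.1 (mem_range_self k)

lemma IsOuterMeasureOn.isLambdaSystem_isCaratheodory (hm : IsOuterMeasureOn m) :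
    IsLambdaSystem {c | IsCaratheodory m c} where
  top_mem x := by simp [hm.map_bot]
  compl_mem {c} hc x := by simpa [add_comm] using hc x
  isLUB_mem {a} ha hd s hs x :=
    calc m (x ⊓ s) + m (x ⊓ sᶜ) ≤ ∑' n, m (x ⊓ a n) + m (x ⊓ sᶜ) := by
          gcongr
          exact hm.le_tsum (hs.inf_left x).2
      _ ≤ m x := hm.tsum_inf_add_le_of_isCaratheodory ha hd hs x

lemma IsOuterMeasureOn.isMeasureOn (hm : IsOuterMeasureOn m) (hc : ∀ c, IsCaratheodory m c) :
    IsMeasureOn m := by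
  refine ⟨hm.map_bot, fun a hd s hs => le_antisymm (hm.le_tsum hs.2) ?_⟩
  calc ∑' n, m (a n) = ∑' n, m (s ⊓ a n) :=
        tsum_congr fun n => by rw [inf_eq_right.2 (hs.1 (mem_range_self n))]
    _ ≤ m s := by
        simpa [hm.map_bot] using hm.tsum_inf_add_le_of_isCaratheodory (fun n => hc (a n)) hd hs s

lemma IsMeasureOn.isLambdaSystem_setOf_eq {μ ν : A → ℝ≥0∞} (hμ : IsMeasureOn μ)
    (hν : IsMeasureOn ν) (htop : μ ⊤ = ν ⊤) (hfin : μ ⊤ ≠ ∞) :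
    IsLambdaSystem {x | μ x = ν x} where
  top_mem := htop
  compl_mem {x} hx := by
    have hsum : μ x + μ xᶜ = μ x + ν xᶜ := by
      rw [← hμ.map_sup inf_compl_eq_bot, hx, ← hν.map_sup inf_compl_eq_bot, sup_compl_eq_top,
        htop]
    have hxfin : μ x ≠ ∞ := ne_top_of_le_ne_top hfin <|
      calc μ x ≤ μ x + μ xᶜ := le_self_add
        _ = μ ⊤ := by rw [← hμ.map_sup inf_compl_eq_bot, sup_compl_eq_top]
    exact (ENNReal.add_right_inj hxfin).1 hsum
  isLUB_mem {a} ha hd s hs := by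
    show μ s = ν s
    rw [hμ.2 a hd s hs, hν.2 a hd s hs]
    exact tsum_congr ha

end OuterMeasure

section OuterExtension

variable {B C : Type*} [Preorder C] {η : B → C} {μ₀ : B → ℝ≥0∞} {x : C}

/-- `x` is covered by `η ∘ b` when it lies below every upper bound of the family, that is,
below its least upper bound. -/
noncomputable def outerExtension (η : B → C) (μ₀ : B → ℝ≥0∞) (x : C) : ℝ≥0∞ :=
  ⨅ (b : ℕ → B) (_ : x ∈ lowerBounds (upperBounds (range (η ∘ b)))), ∑' n, μ₀ (b n)

lemma outerExtension_le {b : ℕ → B} (hx : x ∈ lowerBounds (upperBounds (range (η ∘ b)))) :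
    outerExtension η μ₀ x ≤ ∑' n, μ₀ (b n) :=
  iInf₂_le b hx

lemma le_outerExtension {r : ℝ≥0∞}
    (h : ∀ b : ℕ → B, x ∈ lowerBounds (upperBounds (range (η ∘ b))) → r ≤ ∑' n, μ₀ (b n)) :
    r ≤ outerExtension η μ₀ x :=
  le_iInf₂ h

lemma outerExtension_le_tsum_tsum {a : ℕ → C} {b : ℕ → ℕ → B}
    (hb : ∀ n, a n ∈ lowerBounds (upperBounds (range (η ∘ b n))))
    (hx : x ∈ lowerBounds (upperBounds (range a))) :
    outerExtension η μ₀ x ≤ ∑' n, ∑' k, μ₀ (b n k) := by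
  calc outerExtension η μ₀ x ≤ ∑' i, μ₀ (b (Nat.unpair i).1 (Nat.unpair i).2) := by
        refine outerExtension_le fun u hu => hx <| forall_mem_range.2 fun n =>
          hb n <| forall_mem_range.2 fun k => ?_
        simpa using hu (mem_range_self (Nat.pair n k))
    _ = ∑' p : ℕ × ℕ, μ₀ (b p.1 p.2) := Nat.pairEquiv.symm.tsum_eq fun p => μ₀ (b p.1 p.2)
    _ = ∑' n, ∑' k, μ₀ (b n k) := ENNReal.tsum_prod (f := fun n k => μ₀ (b n k))

lemma outerExtension_le_tsum {a : ℕ → C} (hx : x ∈ lowerBounds (upperBounds (range a))) :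
    outerExtension η μ₀ x ≤ ∑' n, outerExtension η μ₀ (a n) := by
  refine ENNReal.le_of_forall_pos_le_add fun ε hε hfin => ?_
  obtain ⟨δ, hδ, hδε⟩ := ENNReal.exists_pos_sum_of_countable (ENNReal.coe_ne_zero.2 hε.ne') ℕ
  have hcover : ∀ n, ∃ b : ℕ → B, a n ∈ lowerBounds (upperBounds (range (η ∘ b))) ∧
      ∑' k, μ₀ (b k) ≤ outerExtension η μ₀ (a n) + δ n := fun n => by
    have hlt : outerExtension η μ₀ (a n) < outerExtension η μ₀ (a n) + δ n :=
      ENNReal.lt_add_right (ne_top_of_le_ne_top hfin.ne (ENNReal.le_tsum n))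
        (ENNReal.coe_ne_zero.2 (hδ n).ne')
    obtain ⟨b, hb⟩ := iInf_lt_iff.1 hlt
    obtain ⟨hbn, hbδ⟩ := iInf_lt_iff.1 hb
    exact ⟨b, hbn, hbδ.le⟩
  choose b hb hbδ using hcover
  calc outerExtension η μ₀ x ≤ ∑' n, ∑' k, μ₀ (b n k) := outerExtension_le_tsum_tsum hb hx
    _ ≤ ∑' n, (outerExtension η μ₀ (a n) + δ n) := ENNReal.tsum_le_tsum hbδ
    _ = ∑' n, outerExtension η μ₀ (a n) + ∑' n, (δ n : ℝ≥0∞) := ENNReal.tsum_add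
    _ ≤ ∑' n, outerExtension η μ₀ (a n) + ε := by gcongr

end OuterExtension

section OuterExtensionBoolean

variable {B C : Type*} [BooleanAlgebra B] [BooleanAlgebra C] {η : B → C} {μ₀ : B → ℝ≥0∞}

lemma isOuterMeasureOn_outerExtension (h0 : μ₀ ⊥ = 0) :
    IsOuterMeasureOn (outerExtension η μ₀) where
  map_bot := le_antisymm
    ((outerExtension_le (b := fun _ => ⊥) fun _ _ => bot_le).trans_eq (by simp [h0])) bot_le
  le_tsum := outerExtension_le_tsum

lemma isCaratheodory_outerExtension_apply (hη : IsBoolHom η)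
    (hadd : ∀ a b : B, a ⊓ b = ⊥ → μ₀ (a ⊔ b) = μ₀ a + μ₀ b) (c : B) :
    IsCaratheodory (outerExtension η μ₀) (η c) := fun x => by
  refine le_outerExtension fun b hb => ?_
  have hcover : ∀ d, η d ⊓ x ∈ lowerBounds (upperBounds (range (η ∘ fun k => d ⊓ b k))) :=
    fun d => by
      simpa only [Function.comp_def, hη.map_inf] using
        inf_mem_lowerBounds_upperBounds_range hb (η d)
  calc outerExtension η μ₀ (x ⊓ η c) + outerExtension η μ₀ (x ⊓ (η c)ᶜ)
      ≤ ∑' k, μ₀ (c ⊓ b k) + ∑' k, μ₀ (cᶜ ⊓ b k) := by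
        rw [inf_comm x, inf_comm x, ← hη.map_compl]
        exact add_le_add (outerExtension_le (hcover c)) (outerExtension_le (hcover cᶜ))
    _ = ∑' k, (μ₀ (c ⊓ b k) + μ₀ (cᶜ ⊓ b k)) := ENNReal.tsum_add.symm
    _ = ∑' k, μ₀ (b k) := tsum_congr fun k => by
        rw [← hadd _ _ (disjoint_compl_right.mono inf_le_left inf_le_left).eq_bot,
          ← inf_sup_right, sup_compl_eq_top, top_inf_eq]

lemma outerExtension_apply (hfree : IsSigmaUniversal η) (hC : IsAbstractSigmaAlgebra C)
    (h0 : μ₀ ⊥ = 0) (hadd : ∀ a b : B, a ⊓ b = ⊥ → μ₀ (a ⊔ b) = μ₀ a + μ₀ b) (b : B) :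
    outerExtension η μ₀ (η b) = μ₀ b := by
  refine le_antisymm ?_ (le_outerExtension fun bs hbs => ?_)
  · calc outerExtension η μ₀ (η b) ≤ ∑' n, μ₀ (pairSeq b ⊥ n) :=
          outerExtension_le fun _ hu => hu (mem_range_self 0)
      _ = μ₀ b := by rw [tsum_pairSeq h0, h0, add_zero]
  · obtain ⟨s, hs⟩ := hC (η ∘ bs)
    obtain ⟨F, hF⟩ := hfree.exists_finset_le_sup hs (hbs hs.1)
    calc μ₀ b ≤ μ₀ (F.sup bs) := monotone_of_additive hadd hF
      _ ≤ ∑ i ∈ F, μ₀ (bs i) := map_finset_sup_le_sum_of_additive h0 hadd F bs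
      _ ≤ ∑' n, μ₀ (bs n) := ENNReal.sum_le_tsum F

end OuterExtensionBoolean

/-- Every additive `[0,1]`-valued function on a Boolean algebra `B` extends
uniquely to a measure on the free abstract σ-algebra `CB(B)` on `B`, and the
extension again takes values in `[0,1]`. -/
theorem exists_unique_measure_on_free {B : Type u} {C : Type v}
    [BooleanAlgebra B] [BooleanAlgebra C]
    (hC : IsAbstractSigmaAlgebra C) (η : B → C) (hη : IsBoolHom η)
    (huniv : ∀ (D : Type v) [BooleanAlgebra D], IsAbstractSigmaAlgebra D →
      ∀ f : B → D, IsBoolHom f → ∃! g : C → D, IsSigmaMorphism g ∧ g ∘ η = f)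
    (μ₀ : B → ℝ≥0∞) (h0 : μ₀ ⊥ = 0) (h1 : μ₀ ⊤ ≤ 1)
    (hadd : ∀ a b : B, a ⊓ b = ⊥ → μ₀ (a ⊔ b) = μ₀ a + μ₀ b) :
    ∃ μ : C → ℝ≥0∞, (IsMeasureOn μ ∧ μ ∘ η = μ₀) ∧ (∀ x, μ x ≤ 1) ∧
      ∀ ν : C → ℝ≥0∞, IsMeasureOn ν ∧ ν ∘ η = μ₀ → ν = μ := by
  have hfree : IsSigmaUniversal η := huniv
  set μ := outerExtension η μ₀
  have hμ : IsOuterMeasureOn μ := isOuterMeasureOn_outerExtension h0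
  have hμη : μ ∘ η = μ₀ := funext (outerExtension_apply hfree hC h0 hadd)
  have hmeas : IsMeasureOn μ := hμ.isMeasureOn <| hfree.forall_mem_of_isLambdaSystem hC hη
    hμ.isLambdaSystem_isCaratheodory (isCaratheodory_outerExtension_apply hη hadd)
  have htop : μ ⊤ = μ₀ ⊤ := by rw [← hη.map_top]; exact congrFun hμη ⊤
  refine ⟨μ, ⟨hmeas, hμη⟩, fun x => (hμ.mono le_top).trans (htop ▸ h1), ?_⟩
  rintro ν ⟨hν, hνη⟩
  have hνtop : ν ⊤ = μ₀ ⊤ := by rw [← hη.map_top]; exact congrFun hνη ⊤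
  funext x
  refine hfree.forall_mem_of_isLambdaSystem hC hη
    (hν.isLambdaSystem_setOf_eq hmeas (hνtop.trans htop.symm) ?_) (fun b => ?_) x
  · exact ne_top_of_le_ne_top ENNReal.one_ne_top (hνtop ▸ h1)
  · exact (congrFun hνη b).trans (congrFun hμη b).symm
end

section
/- (Existence of the point-free radonification.) Let B be a Boolean algebra and μ₀ : B → ℝ≥0∞ an additive function with values in [0,1]. Then there exist an abstract σ-algebra B̃, a measure μ̃ on B̃, and a Boolean algebra homomorphism β : B → B̃ such that: μ̃ (β a) = μ₀ a for all a ∈ B; μ̃ is reduced, i.e. μ̃ x = 0 implies x = ⊥; and B̃ is generated by the image of β, i.e. the only subset of B̃ that contains the image of β, is closed under complements, and contains a least upper bound of each of its ℕ-indexed families, is all of B̃. -/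
open scoped ENNReal

universe u

/-- A point-free radonification of an additive `[0,1]`-valued function `μ₀` on a
Boolean algebra `B`: a reduced abstract σ-algebra with measure, generated by a
Boolean-homomorphic image of `B` on which the measure restricts to `μ₀`. -/
structure Radonification (B : Type u) [BooleanAlgebra B] (μ₀ : B → ℝ≥0∞) :
    Type (u + 1) where
  Bt : Type u
  [inst : BooleanAlgebra Bt]
  sigma : IsAbstractSigmaAlgebra Bt
  μt : Bt → ℝ≥0∞
  meas : IsMeasureOn μt
  β : B → Bt
  hom : IsBoolHom β
  compat : ∀ a : B, μt (β a) = μ₀ a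
  reduced : ∀ x : Bt, μt x = 0 → x = ⊥
  generated : ∀ S : Set Bt, Set.range β ⊆ S → (∀ x ∈ S, xᶜ ∈ S) →
    (∀ a : ℕ → Bt, (∀ n, a n ∈ S) → ∀ s : Bt, IsLUB (Set.range a) s → s ∈ S) →
    S = Set.univ

/-! Represent `B` as the algebra of clopen sets of its Stone space `X`, whose points are the
lattice homomorphisms `B → Bool` (there are enough of them by the prime ideal theorem). Since
`X` is compact, a clopen set covered by countably many clopen sets is covered by finitely many
of them, so the content that `μ₀` induces on the clopens is σ-subadditive and Carathéodory's
construction extends it to a measure `μ` on the σ-algebra they generate. The measure algebra of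
`μ`, measurable sets modulo `μ`-null sets, is σ-complete, carries the reduced measure induced by
`μ`, and is generated by the classes of the clopens, i.e. by the image of `B`. -/

open Set Function MeasureTheory Order

namespace Order.Ideal.IsPrime

variable {L : Type*} [Lattice L] [BoundedOrder L] {J : Ideal L}

open Classical in
noncomputable def boolHom (hJ : J.IsPrime) : BoundedLatticeHom L Bool where
  toFun x := decide (x ∉ J)
  map_sup' x y := by simp [Ideal.sup_mem_iff]
  map_inf' x y := by
    have : x ⊓ y ∈ J ↔ x ∈ J ∨ y ∈ J :=
      ⟨hJ.mem_or_mem, fun h => h.elim (J.lower inf_le_left) (J.lower inf_le_right)⟩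
    simp [this, not_or]
  map_top' := by simp [hJ.top_notMem]
  map_bot' := by simp [J.bot_mem]

end Order.Ideal.IsPrime

lemma exists_boundedLatticeHom_bool_apply_eq_true {L : Type*} [DistribLattice L]
    [BoundedOrder L] {a : L} (ha : a ≠ ⊥) : ∃ f : BoundedLatticeHom L Bool, f a = true := by
  have hdisj : Disjoint (PFilter.principal a : Set L) (Ideal.principal (⊥ : L) : Set L) :=
    Set.disjoint_left.2 fun x (hax : a ≤ x) (hx : x ≤ ⊥) => ha (le_bot_iff.1 (hax.trans hx))
  obtain ⟨J, hJ, -, hFJ⟩ := DistribLattice.prime_ideal_of_disjoint_filter_ideal hdisj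
  exact ⟨hJ.boolHom, by simpa [Ideal.IsPrime.boolHom] using Set.disjoint_left.1 hFJ le_rfl⟩

namespace MeasureTheory

theorem AddContent.isSigmaSubadditive_of_isCompact_isOpen {α : Type*} [TopologicalSpace α]
    {C : Set (Set α)} (hC : IsSetRing C) (hcompact : ∀ s ∈ C, IsCompact s)
    (hopen : ∀ s ∈ C, IsOpen s) (m : AddContent ℝ≥0∞ C) : m.IsSigmaSubadditive := by
  intro f hf hUnion
  obtain ⟨t, ht⟩ := (hcompact _ hUnion).elim_finite_subcover f (fun i => hopen _ (hf i))
    subset_rfl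
  calc m (⋃ i, f i) ≤ m (⋃ i ∈ t, f i) :=
        addContent_mono hC.isSetSemiring hUnion (hC.biUnion_mem t fun i _ => hf i) ht
    _ ≤ ∑ i ∈ t, m (f i) := addContent_biUnion_le hC fun i _ => hf i
    _ ≤ ∑' i, m (f i) := ENNReal.sum_le_tsum t

end MeasureTheory

def StoneSpace (B : Type*) [BooleanAlgebra B] : Type _ := BoundedLatticeHom B Bool

namespace StoneSpace

variable {B : Type*} [BooleanAlgebra B]

instance : FunLike (StoneSpace B) B Bool :=
  inferInstanceAs (FunLike (BoundedLatticeHom B Bool) B Bool)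

instance : BoundedLatticeHomClass (StoneSpace B) B Bool :=
  inferInstanceAs (BoundedLatticeHomClass (BoundedLatticeHom B Bool) B Bool)

instance : TopologicalSpace (StoneSpace B) := .induced (⇑) inferInstance

lemma isClosed_range_coe : IsClosed (range ((⇑) : StoneSpace B → B → Bool)) := by
  have hrange : range ((⇑) : StoneSpace B → B → Bool) =
      {f | f ⊤ = ⊤} ∩ {f | f ⊥ = ⊥} ∩ (⋂ (a) (b), {f | f (a ⊔ b) = f a ⊔ f b}) ∩
        ⋂ (a) (b), {f | f (a ⊓ b) = f a ⊓ f b} := by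
    ext f
    constructor
    · rintro ⟨x, rfl⟩
      simp
    · simp only [mem_inter_iff, mem_iInter, mem_ofPred_eq]
      rintro ⟨⟨⟨htop, hbot⟩, hsup⟩, hinf⟩
      exact ⟨(⟨⟨⟨f, hsup⟩, hinf⟩, htop, hbot⟩ : BoundedLatticeHom B Bool), rfl⟩
  have hpair (a b : B) : Continuous fun f : B → Bool => (f a, f b) :=
    (continuous_apply a).prodMk (continuous_apply b)
  rw [hrange]
  refine .inter (.inter (.inter ?_ ?_) ?_) ?_
  · exact isClosed_eq (continuous_apply _) continuous_const
  · exact isClosed_eq (continuous_apply _) continuous_const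
  · exact isClosed_iInter fun a => isClosed_iInter fun b => isClosed_eq (continuous_apply _)
      ((continuous_of_discreteTopology (f := fun p : Bool × Bool => p.1 ⊔ p.2)).comp (hpair a b))
  · exact isClosed_iInter fun a => isClosed_iInter fun b => isClosed_eq (continuous_apply _)
      ((continuous_of_discreteTopology (f := fun p : Bool × Bool => p.1 ⊓ p.2)).comp (hpair a b))

instance : CompactSpace (StoneSpace B) :=
  isCompact_univ_iff.1 <| (Topology.IsInducing.induced _).isCompact_iff.2 <| by
    rw [image_univ]
    exact isClosed_range_coe.isCompact

def basicSet : BoundedLatticeHom B (Set (StoneSpace B)) where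
  toFun a := {x | x a = true}
  map_sup' a b := by ext x; simp
  map_inf' a b := by ext x; simp
  map_top' := by ext x; simp
  map_bot' := by ext x; simp

lemma isClopen_basicSet (a : B) : IsClopen (basicSet a) :=
  (isClopen_discrete {true}).preimage ((continuous_apply a).comp continuous_induced_dom)

lemma basicSet_subset_basicSet {a b : B} : basicSet a ⊆ basicSet b ↔ a ≤ b := by
  refine ⟨fun h => ?_, fun h => OrderHomClass.mono basicSet h⟩
  by_contra hab
  obtain ⟨x, hx⟩ := exists_boundedLatticeHom_bool_apply_eq_true
    fun h => hab (sdiff_eq_bot_iff.1 h)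
  have hx : x ∈ basicSet (a \ b) := hx
  rw [map_sdiff'] at hx
  exact hx.2 (h hx.1)

lemma basicSet_injective : Injective (basicSet (B := B)) := fun _ _ h =>
  le_antisymm (basicSet_subset_basicSet.1 h.le) (basicSet_subset_basicSet.1 h.ge)

lemma isSetRing_range_basicSet : IsSetRing (range (basicSet (B := B))) where
  empty_mem := ⟨⊥, map_bot _⟩
  union_mem := by rintro _ _ ⟨a, rfl⟩ ⟨b, rfl⟩; exact ⟨a ⊔ b, map_sup _ a b⟩
  sdiff_mem := by rintro _ _ ⟨a, rfl⟩ ⟨b, rfl⟩; exact ⟨a \ b, map_sdiff' _ a b⟩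

instance : MeasurableSpace (StoneSpace B) := .generateFrom (range basicSet)

lemma measurableSet_basicSet (a : B) : MeasurableSet (basicSet a) :=
  MeasurableSpace.measurableSet_generateFrom (mem_range_self a)

noncomputable def content (μ₀ : B → ℝ≥0∞) (h0 : μ₀ ⊥ = 0)
    (hadd : ∀ a b : B, a ⊓ b = ⊥ → μ₀ (a ⊔ b) = μ₀ a + μ₀ b) :
    AddContent ℝ≥0∞ (range (basicSet (B := B))) :=
  isSetRing_range_basicSet.addContent_of_union (extend basicSet μ₀ 0)
    (by rw [← bot_eq_empty, ← map_bot (basicSet (B := B)), basicSet_injective.extend_apply, h0])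
    (by
      rintro _ _ ⟨a, rfl⟩ ⟨b, rfl⟩ hab
      have hinf : a ⊓ b = ⊥ := basicSet_injective <| by
        rw [map_inf, map_bot]
        exact disjoint_iff.1 hab
      rw [show basicSet a ∪ basicSet b = basicSet (a ⊔ b) from (map_sup basicSet a b).symm]
      simp only [basicSet_injective.extend_apply, hadd a b hinf])

variable (μ₀ : B → ℝ≥0∞) (h0 : μ₀ ⊥ = 0)
  (hadd : ∀ a b : B, a ⊓ b = ⊥ → μ₀ (a ⊔ b) = μ₀ a + μ₀ b)

lemma content_basicSet (a : B) : content μ₀ h0 hadd (basicSet a) = μ₀ a :=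
  basicSet_injective.extend_apply _ _ a

noncomputable def measure (μ₀ : B → ℝ≥0∞) (h0 : μ₀ ⊥ = 0)
    (hadd : ∀ a b : B, a ⊓ b = ⊥ → μ₀ (a ⊔ b) = μ₀ a + μ₀ b) : Measure (StoneSpace B) :=
  (content μ₀ h0 hadd).measure isSetRing_range_basicSet.isSetSemiring le_rfl <|
    AddContent.isSigmaSubadditive_of_isCompact_isOpen isSetRing_range_basicSet
      (by rintro _ ⟨a, rfl⟩; exact (isClopen_basicSet a).isClosed.isCompact)
      (by rintro _ ⟨a, rfl⟩; exact (isClopen_basicSet a).isOpen) _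

lemma measure_basicSet (a : B) : measure μ₀ h0 hadd (basicSet a) = μ₀ a := by
  rw [measure, AddContent.measure_eq _ _ rfl _ (mem_range_self a), content_basicSet]

end StoneSpace

namespace Filter.Germ

variable {α β : Type*} {l : Filter α}

instance instCompl [Compl β] : Compl (Germ l β) := ⟨map compl⟩

instance instBooleanAlgebra [BooleanAlgebra β] : BooleanAlgebra (Germ l β) where
  __ := instDistribLattice
  __ := instBoundedOrder
  compl := compl
  inf_compl_le_bot f := inductionOn f fun _ => .of_forall fun _ => inf_compl_eq_bot.le
  top_le_sup_compl f := inductionOn f fun _ => .of_forall fun _ => sup_compl_eq_top.ge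

end Filter.Germ

namespace MeasureTheory.Measure

open Filter

variable {α : Type*} [MeasurableSpace α] (μ : Measure α)

def aeClass (s : Set α) : Germ (ae μ) Prop := ↑fun x => x ∈ s

variable {μ}

lemma aeClass_le_aeClass {s t : Set α} : μ.aeClass s ≤ μ.aeClass t ↔ s ≤ᵐ[μ] t := Iff.rfl

lemma aeClass_eq_aeClass {s t : Set α} : μ.aeClass s = μ.aeClass t ↔ s =ᵐ[μ] t := Germ.coe_eq

lemma aeClass_union (s t : Set α) : μ.aeClass (s ∪ t) = μ.aeClass s ⊔ μ.aeClass t := rfl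

lemma aeClass_inter (s t : Set α) : μ.aeClass (s ∩ t) = μ.aeClass s ⊓ μ.aeClass t := rfl

lemma aeClass_compl (s : Set α) : μ.aeClass sᶜ = (μ.aeClass s)ᶜ := rfl

lemma aeClass_empty : μ.aeClass ∅ = ⊥ := rfl

lemma aeClass_eq_bot {s : Set α} : μ.aeClass s = ⊥ ↔ μ s = 0 := by
  rw [← aeClass_empty, aeClass_eq_aeClass, ae_eq_empty]

lemma isLUB_aeClass_iUnion (s : ℕ → Set α) :
    IsLUB (range fun n => μ.aeClass (s n)) (μ.aeClass (⋃ n, s n)) := by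
  refine ⟨forall_mem_range.2 fun n => aeClass_le_aeClass.2 (subset_iUnion s n).eventuallyLE,
    fun g hg => ?_⟩
  induction g using Germ.inductionOn with | h p => ?_
  have hp : ∀ n, s n ≤ᵐ[μ] {x | p x} := fun n => hg (mem_range_self n)
  filter_upwards [ae_all_iff.2 hp] with x hx hmem
  obtain ⟨n, hn⟩ := mem_iUnion.1 hmem
  exact hx n hn

variable (μ) in
/-- Measurable sets modulo `μ`-null sets, realised inside the Boolean algebra of all sets
modulo `μ`-null sets (germs of predicates along `ae μ`). -/
def measureAlgebra : BooleanSubalgebra (Germ (ae μ) Prop) where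
  carrier := μ.aeClass '' {s | MeasurableSet s}
  supClosed' := by
    rintro _ ⟨s, hs, rfl⟩ _ ⟨t, ht, rfl⟩
    exact ⟨s ∪ t, hs.union ht, aeClass_union s t⟩
  infClosed' := by
    rintro _ ⟨s, hs, rfl⟩ _ ⟨t, ht, rfl⟩
    exact ⟨s ∩ t, hs.inter ht, aeClass_inter s t⟩
  compl_mem' := by
    rintro _ ⟨s, hs, rfl⟩
    exact ⟨sᶜ, hs.compl, aeClass_compl s⟩
  bot_mem' := ⟨∅, .empty, aeClass_empty⟩

namespace measureAlgebra

def mk {s : Set α} (hs : MeasurableSet s) : μ.measureAlgebra := ⟨μ.aeClass s, s, hs, rfl⟩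

lemma exists_mk_eq (x : μ.measureAlgebra) : ∃ (s : Set α) (hs : MeasurableSet s), mk hs = x := by
  obtain ⟨_, s, hs, rfl⟩ := x
  exact ⟨s, hs, rfl⟩

lemma isBoolHom_mk_comp {A : Type*} [BooleanAlgebra A] (f : BoundedLatticeHom A (Set α))
    (hf : ∀ a, MeasurableSet (f a)) : IsBoolHom fun a => mk (μ := μ) (hf a) :=
  ⟨Subtype.ext (congrArg μ.aeClass (map_bot f)), Subtype.ext (congrArg μ.aeClass (map_top f)),
    fun a b => Subtype.ext (congrArg μ.aeClass (map_inf f a b)),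
    fun a b => Subtype.ext (congrArg μ.aeClass (map_sup f a b)),
    fun a => Subtype.ext (congrArg μ.aeClass (map_compl' f a))⟩

lemma isLUB_mk_iUnion {s : ℕ → Set α} (hs : ∀ n, MeasurableSet (s n)) :
    IsLUB (range fun n => mk (μ := μ) (hs n)) (mk (.iUnion hs)) :=
  IsLUB.of_image (f := Subtype.val) Iff.rfl <| by
    rw [← range_comp]
    exact isLUB_aeClass_iUnion s

lemma isAbstractSigmaAlgebra : IsAbstractSigmaAlgebra μ.measureAlgebra := by
  intro a
  choose s hs ha using fun n => exists_mk_eq (a n)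
  obtain rfl : (fun n => mk (hs n)) = a := funext ha
  exact ⟨_, isLUB_mk_iUnion hs⟩

def measure (x : μ.measureAlgebra) : ℝ≥0∞ :=
  Germ.liftOn x.1 (fun p => μ {a | p a}) fun _ _ h => measure_congr h

lemma measure_mk {s : Set α} (hs : MeasurableSet s) : measure (mk (μ := μ) hs) = μ s := rfl

lemma isMeasureOn_measure : IsMeasureOn (measure (μ := μ)) := by
  refine ⟨measure_empty, fun a hdisj x hx => ?_⟩
  choose s hs ha using fun n => exists_mk_eq (a n)
  obtain rfl : (fun n => mk (hs n)) = a := funext ha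
  obtain rfl := hx.unique (isLUB_mk_iUnion hs)
  have hnull : Pairwise (AEDisjoint μ on s) := fun i j hij =>
    aeClass_eq_bot.1 (congrArg Subtype.val (hdisj i j hij))
  simp only [measure_mk]
  exact measure_iUnion₀ hnull fun n => (hs n).nullMeasurableSet

lemma eq_bot_of_measure_eq_zero {x : μ.measureAlgebra} (hx : measure x = 0) : x = ⊥ := by
  obtain ⟨s, hs, rfl⟩ := exists_mk_eq x
  exact Subtype.ext (aeClass_eq_bot.2 hx)

lemma eq_univ_of_generateFrom {G : Set (Set α)} (hG : ‹MeasurableSpace α› = .generateFrom G)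
    {S : Set μ.measureAlgebra} (hbot : ⊥ ∈ S) (hbasic : ∀ s ∈ G, ∀ hs : MeasurableSet s, mk hs ∈ S)
    (hcompl : ∀ x ∈ S, xᶜ ∈ S)
    (hlub : ∀ a : ℕ → μ.measureAlgebra, (∀ n, a n ∈ S) → ∀ x, IsLUB (range a) x → x ∈ S) :
    S = univ := by
  suffices ∀ s, MeasurableSet[.generateFrom G] s → ∀ hs : MeasurableSet s, mk hs ∈ S by
    refine eq_univ_of_forall fun x => ?_
    obtain ⟨s, hs, rfl⟩ := exists_mk_eq x
    exact this s (hG ▸ hs) hs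
  intro s hs
  induction s, hs using MeasurableSpace.generateFrom_induction with
  | hC s hsG => exact hbasic s hsG
  | empty => exact fun _ => hbot
  | compl s _ hmem => exact fun hs => hcompl _ (hmem hs.of_compl)
  | iUnion s hs hmem =>
    exact fun _ => hlub _ (fun n => hmem n (hG ▸ hs n)) _ (isLUB_mk_iUnion fun n => hG ▸ hs n)

end measureAlgebra

end MeasureTheory.Measure

open MeasureTheory.Measure

theorem radonification_exists_general {B : Type u} [BooleanAlgebra B]
    (μ₀ : B → ℝ≥0∞) (h0 : μ₀ ⊥ = 0)
    (hadd : ∀ a b : B, a ⊓ b = ⊥ → μ₀ (a ⊔ b) = μ₀ a + μ₀ b) :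
    Nonempty (Radonification B μ₀) := by
  let μ := StoneSpace.measure μ₀ h0 hadd
  have hom := measureAlgebra.isBoolHom_mk_comp (μ := μ) _ StoneSpace.measurableSet_basicSet
  exact ⟨{
    Bt := μ.measureAlgebra
    sigma := measureAlgebra.isAbstractSigmaAlgebra
    μt := measureAlgebra.measure
    meas := measureAlgebra.isMeasureOn_measure
    β := fun a => measureAlgebra.mk (StoneSpace.measurableSet_basicSet a)
    hom := hom
    compat := StoneSpace.measure_basicSet μ₀ h0 hadd
    reduced := fun _ => measureAlgebra.eq_bot_of_measure_eq_zero
    generated := fun _ hβ hcompl hlub => measureAlgebra.eq_univ_of_generateFrom rfl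
      (hom.1 ▸ hβ (mem_range_self ⊥)) (by rintro _ ⟨a, rfl⟩ _; exact hβ (mem_range_self a))
      hcompl hlub }⟩

/-- Existence of the point-free radonification: every additive `[0,1]`-valued
function on a Boolean algebra extends to a reduced measure on an abstract
σ-algebra generated by the image of the Boolean algebra. -/
theorem radonification_exists {B : Type u} [BooleanAlgebra B]
    (μ₀ : B → ℝ≥0∞) (h0 : μ₀ ⊥ = 0) (h1 : μ₀ ⊤ ≤ 1)
    (hadd : ∀ a b : B, a ⊓ b = ⊥ → μ₀ (a ⊔ b) = μ₀ a + μ₀ b) :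
    Nonempty (Radonification B μ₀) :=
  radonification_exists_general μ₀ h0 hadd
end

section
/- (Uniqueness of the point-free radonification.) Let B be a Boolean algebra and μ₀ : B → ℝ≥0∞ an additive function with values in [0,1]. For k = 1, 2, let B̃ₖ be an abstract σ-algebra, μ̃ₖ a reduced measure on B̃ₖ (μ̃ₖ x = 0 implies x = ⊥), and βₖ : B → B̃ₖ a Boolean algebra homomorphism with μ̃ₖ ∘ βₖ = μ₀, such that B̃ₖ is generated by the image of βₖ (the only subset of B̃ₖ containing the image of βₖ, closed under complements, and containing a least upper bound of each of its ℕ-indexed families, is all of B̃ₖ). Then there exists exactly one σ-morphism Φ : B̃₁ → B̃₂ with Φ ∘ β₁ = β₂, and this Φ is a bijection (an isomorphism of abstract σ-algebras) satisfying μ̃₂ ∘ Φ = μ̃₁. -/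
open scoped ENNReal

/-!
Measure `x, x' ∈ Bᵢ` apart by `μᵢ (x ∆ x')`. Since the `βᵢ` are Boolean homomorphisms and
`μ₁ ∘ β₁ = μ₂ ∘ β₂`, the correspondence `β₁ c ↦ β₂ c` preserves these distances, and `Φ` is its
extension by continuity: `Φ x = y` means that `(x, y)` is a limit of pairs `(β₁ c, β₂ c)`.
Such limit pairs are closed under complements, finite suprema and, by continuity from below of
the finite measures `μᵢ`, countable suprema; as `B₁` is generated by `β₁`, every `x` has a partner
`y`. The partner is unique because `(x ∆ x, y ∆ y') = (⊥, y ∆ y')` is again a limit pair, so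
`μ₂ (y ∆ y') = μ₁ ⊥ = 0`. Exchanging the roles of `B₁` and `B₂` gives the inverse, and any two
σ-morphisms agreeing on the image of `β₁` agree on all of `B₁` by generation.
-/

open scoped symmDiff Topology
open Filter Function Set

theorem sup_symmDiff_sup_le {α : Type*} [BooleanAlgebra α] (a b c d : α) :
    (a ⊔ b) ∆ (c ⊔ d) ≤ a ∆ c ⊔ b ∆ d := by
  rw [symmDiff_le_iff]
  constructor <;> refine sup_le ?_ ?_
  · exact (le_symmDiff_sup_right a c).trans
      (sup_le (le_sup_of_le_right le_sup_left) (le_sup_of_le_left le_sup_left))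
  · exact (le_symmDiff_sup_right b d).trans
      (sup_le (le_sup_of_le_right le_sup_right) (le_sup_of_le_left le_sup_right))
  · exact (le_symmDiff_sup_left a c).trans
      (sup_le (le_sup_of_le_right le_sup_left) (le_sup_of_le_left le_sup_left))
  · exact (le_symmDiff_sup_left b d).trans
      (sup_le (le_sup_of_le_right le_sup_right) (le_sup_of_le_left le_sup_right))

theorem isLUB_range_partialSups_iff {α : Type*} [SemilatticeSup α] {a : ℕ → α} {s : α} :
    IsLUB (range (partialSups a)) s ↔ IsLUB (range a) s := by
  rw [IsLUB, IsLUB, upperBounds_range_partialSups]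

namespace IsMeasureOn

variable {A : Type*} [BooleanAlgebra A] {μ : A → ℝ≥0∞}

theorem sup_eq_add (hμ : IsMeasureOn μ) {a b : A} (h : Disjoint a b) :
    μ (a ⊔ b) = μ a + μ b := by
  let e : ℕ → A := fun n => if n = 0 then a else if n = 1 then b else ⊥
  have he : ∀ i j, i ≠ j → e i ⊓ e j = ⊥ := by
    intro i j hij
    rcases i with _ | _ | i <;> rcases j with _ | _ | j <;>
      simp_all [e, ← disjoint_iff, h.symm]
  have hlub : IsLUB (range e) (a ⊔ b) := by
    refine ⟨?_, fun u hu => sup_le (hu ⟨0, rfl⟩) (hu ⟨1, rfl⟩)⟩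
    rintro _ ⟨_ | _ | n, rfl⟩ <;> simp [e]
  rw [hμ.2 e he _ hlub, tsum_eq_sum (s := Finset.range 2) fun n hn => ?_]
  · simp [e, Finset.sum_range_succ]
  · rcases n with _ | _ | n <;> simp_all [e, hμ.1]

theorem mono (hμ : IsMeasureOn μ) {a b : A} (h : a ≤ b) : μ a ≤ μ b := by
  rw [← sup_sdiff_cancel_right h, hμ.sup_eq_add disjoint_sdiff_self_right]
  exact le_self_add

theorem sup_le_add (hμ : IsMeasureOn μ) (a b : A) : μ (a ⊔ b) ≤ μ a + μ b := by
  rw [← sup_sdiff_self_right, hμ.sup_eq_add disjoint_sdiff_self_right]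
  gcongr
  exact hμ.mono sdiff_le

theorem symmDiff_triangle (hμ : IsMeasureOn μ) (a b c : A) :
    μ (a ∆ c) ≤ μ (a ∆ b) + μ (b ∆ c) :=
  (hμ.mono (_root_.symmDiff_triangle a b c)).trans (hμ.sup_le_add _ _)

theorem le_add_symmDiff (hμ : IsMeasureOn μ) (a b : A) : μ a ≤ μ b + μ (a ∆ b) := by
  rw [add_comm]
  exact (hμ.mono (le_symmDiff_sup_right a b)).trans (hμ.sup_le_add _ _)

theorem sup_symmDiff_sup_le_add (hμ : IsMeasureOn μ) (a b c d : A) :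
    μ ((a ⊔ b) ∆ (c ⊔ d)) ≤ μ (a ∆ c) + μ (b ∆ d) :=
  (hμ.mono (sup_symmDiff_sup_le a b c d)).trans (hμ.sup_le_add _ _)

theorem symmDiff_lt_of_lt_half (hμ : IsMeasureOn μ) {a b c : A} {ε : ℝ≥0∞}
    (hab : μ (a ∆ b) < ε / 2) (hbc : μ (b ∆ c) < ε / 2) : μ (a ∆ c) < ε :=
  (hμ.symmDiff_triangle a b c).trans_lt (ENNReal.add_halves ε ▸ ENNReal.add_lt_add hab hbc)

theorem partialSups_eq_sum (hμ : IsMeasureOn μ) {d : ℕ → A} (hd : Pairwise (Disjoint on d))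
    (n : ℕ) : μ (partialSups d n) = ∑ i ∈ Finset.range (n + 1), μ (d i) := by
  induction n with
  | zero => simp
  | succ n ih =>
    have hdisj : Disjoint (partialSups d n) (d (n + 1)) :=
      disjoint_partialSups_left.2 fun j hj => hd (by omega)
    rw [partialSups_add_one, hμ.sup_eq_add hdisj, ih, Finset.sum_range_succ _ (n + 1)]

theorem tendsto_of_monotone (hμ : IsMeasureOn μ) {a : ℕ → A} (ha : Monotone a) {s : A}
    (hs : IsLUB (range a) s) : Tendsto (fun n => μ (a n)) atTop (𝓝 (μ s)) := by
  have hlub : IsLUB (range (disjointed a)) s := by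
    rwa [← isLUB_range_partialSups_iff, partialSups_disjointed, isLUB_range_partialSups_iff]
  have hdisj : ∀ i j, i ≠ j → disjointed a i ⊓ disjointed a j = ⊥ :=
    fun i j hij => disjoint_iff.1 (disjoint_disjointed a hij)
  rw [hμ.2 _ hdisj s hlub]
  convert ENNReal.summable.hasSum.tendsto_sum_nat.comp (tendsto_add_atTop_nat 1) using 2 with n
  rw [Function.comp_apply, ← hμ.partialSups_eq_sum (disjoint_disjointed a),
    partialSups_disjointed, ha.partialSups_eq]

theorem tendsto_symmDiff_of_monotone (hμ : IsMeasureOn μ) {a : ℕ → A} (ha : Monotone a) {s : A}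
    (hs : IsLUB (range a) s) (hfin : μ s ≠ ∞) :
    Tendsto (fun n => μ (s ∆ a n)) atTop (𝓝 0) := by
  have hsub : ∀ n, μ (s ∆ a n) = μ s - μ (a n) := fun n => by
    have hfin_n : μ (a n) ≠ ∞ := ne_top_of_le_ne_top hfin (hμ.mono (hs.1 ⟨n, rfl⟩))
    rw [symmDiff_of_ge (hs.1 ⟨n, rfl⟩)]
    refine ENNReal.eq_sub_of_add_eq hfin_n ?_
    rw [add_comm, ← hμ.sup_eq_add disjoint_sdiff_self_right,
      sup_sdiff_cancel_right (hs.1 ⟨n, rfl⟩)]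
  simp_rw [hsub]
  simpa using ENNReal.Tendsto.sub tendsto_const_nhds (hμ.tendsto_of_monotone ha hs) (.inl hfin)

end IsMeasureOn

def IsSigmaGenerated {B A : Type*} [BooleanAlgebra A] (β : B → A) : Prop :=
  ∀ S : Set A, Set.range β ⊆ S → (∀ x ∈ S, xᶜ ∈ S) →
    (∀ a : ℕ → A, (∀ n, a n ∈ S) → ∀ s : A, IsLUB (Set.range a) s → s ∈ S) → S = Set.univ

theorem IsSigmaGenerated.induction {B A : Type*} [BooleanAlgebra A] {β : B → A}
    (hβ : IsSigmaGenerated β) {P : A → Prop} (hP : ∀ c, P (β c)) (hcompl : ∀ x, P x → P xᶜ)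
    (hlub : ∀ (a : ℕ → A) (s : A), (∀ n, P (a n)) → IsLUB (range a) s → P s) (x : A) : P x :=
  eq_univ_iff_forall.1 (hβ {x | P x} (range_subset_iff.2 hP) hcompl
    fun a ha s hs => hlub a s ha hs) x

theorem IsSigmaMorphism.eq_of_comp_eq {B A A' : Type*} [BooleanAlgebra A] [BooleanAlgebra A']
    {β : B → A} (hβ : IsSigmaGenerated β) {Φ Ψ : A → A'} (hΦ : IsSigmaMorphism Φ)
    (hΨ : IsSigmaMorphism Ψ) (h : Φ ∘ β = Ψ ∘ β) : Φ = Ψ := by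
  funext x
  refine hβ.induction (P := fun x => Φ x = Ψ x) (congrFun h) (fun x hx => ?_)
    (fun a s ha hs => ?_) x
  · rw [hΦ.1.2.2.2.2, hΨ.1.2.2.2.2, hx]
  · refine (hΦ.2 a s hs).unique ?_
    simpa only [ha] using hΨ.2 a s hs

section IsJointLimit

variable {B A₁ A₂ : Type*} [BooleanAlgebra A₁] [BooleanAlgebra A₂]
  {μ₁ : A₁ → ℝ≥0∞} {μ₂ : A₂ → ℝ≥0∞} {β₁ : B → A₁} {β₂ : B → A₂} {x x' : A₁} {y y' : A₂}

def IsJointLimit (μ₁ : A₁ → ℝ≥0∞) (β₁ : B → A₁) (μ₂ : A₂ → ℝ≥0∞) (β₂ : B → A₂)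
    (x : A₁) (y : A₂) : Prop :=
  ∀ ε > 0, ∃ c, μ₁ (x ∆ β₁ c) < ε ∧ μ₂ (y ∆ β₂ c) < ε

theorem IsJointLimit.symm (h : IsJointLimit μ₁ β₁ μ₂ β₂ x y) : IsJointLimit μ₂ β₂ μ₁ β₁ y x :=
  fun ε hε => (h ε hε).imp fun _ => And.symm

theorem isJointLimit_apply (hμ₁ : IsMeasureOn μ₁) (hμ₂ : IsMeasureOn μ₂) (c : B) :
    IsJointLimit μ₁ β₁ μ₂ β₂ (β₁ c) (β₂ c) :=
  fun ε hε => ⟨c, by simpa [hμ₁.1], by simpa [hμ₂.1]⟩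

theorem IsJointLimit.compl [BooleanAlgebra B] (hβ₁ : IsBoolHom β₁) (hβ₂ : IsBoolHom β₂)
    (h : IsJointLimit μ₁ β₁ μ₂ β₂ x y) : IsJointLimit μ₁ β₁ μ₂ β₂ xᶜ yᶜ := by
  intro ε hε
  obtain ⟨c, hx, hy⟩ := h ε hε
  exact ⟨cᶜ, by rwa [hβ₁.2.2.2.2, compl_symmDiff_compl],
    by rwa [hβ₂.2.2.2.2, compl_symmDiff_compl]⟩

theorem IsJointLimit.sup [BooleanAlgebra B] (hμ₁ : IsMeasureOn μ₁) (hμ₂ : IsMeasureOn μ₂)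
    (hβ₁ : IsBoolHom β₁) (hβ₂ : IsBoolHom β₂) (h : IsJointLimit μ₁ β₁ μ₂ β₂ x y)
    (h' : IsJointLimit μ₁ β₁ μ₂ β₂ x' y') : IsJointLimit μ₁ β₁ μ₂ β₂ (x ⊔ x') (y ⊔ y') := by
  intro ε hε
  obtain ⟨c, hx, hy⟩ := h (ε / 2) (ENNReal.half_pos hε.ne')
  obtain ⟨c', hx', hy'⟩ := h' (ε / 2) (ENNReal.half_pos hε.ne')
  refine ⟨c ⊔ c', ?_, ?_⟩
  · rw [hβ₁.2.2.2.1, ← ENNReal.add_halves ε]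
    exact (hμ₁.sup_symmDiff_sup_le_add _ _ _ _).trans_lt (ENNReal.add_lt_add hx hx')
  · rw [hβ₂.2.2.2.1, ← ENNReal.add_halves ε]
    exact (hμ₂.sup_symmDiff_sup_le_add _ _ _ _).trans_lt (ENNReal.add_lt_add hy hy')

theorem IsJointLimit.inf [BooleanAlgebra B] (hμ₁ : IsMeasureOn μ₁) (hμ₂ : IsMeasureOn μ₂)
    (hβ₁ : IsBoolHom β₁) (hβ₂ : IsBoolHom β₂) (h : IsJointLimit μ₁ β₁ μ₂ β₂ x y)
    (h' : IsJointLimit μ₁ β₁ μ₂ β₂ x' y') : IsJointLimit μ₁ β₁ μ₂ β₂ (x ⊓ x') (y ⊓ y') := by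
  simpa using ((h.compl hβ₁ hβ₂).sup hμ₁ hμ₂ hβ₁ hβ₂ (h'.compl hβ₁ hβ₂)).compl hβ₁ hβ₂

theorem IsJointLimit.symmDiff [BooleanAlgebra B] (hμ₁ : IsMeasureOn μ₁) (hμ₂ : IsMeasureOn μ₂)
    (hβ₁ : IsBoolHom β₁) (hβ₂ : IsBoolHom β₂) (h : IsJointLimit μ₁ β₁ μ₂ β₂ x y)
    (h' : IsJointLimit μ₁ β₁ μ₂ β₂ x' y') : IsJointLimit μ₁ β₁ μ₂ β₂ (x ∆ x') (y ∆ y') := by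
  rw [symmDiff_eq, symmDiff_eq]
  exact (h.inf hμ₁ hμ₂ hβ₁ hβ₂ (h'.compl hβ₁ hβ₂)).sup hμ₁ hμ₂ hβ₁ hβ₂
    (h'.inf hμ₁ hμ₂ hβ₁ hβ₂ (h.compl hβ₁ hβ₂))

theorem IsJointLimit.partialSups [BooleanAlgebra B] (hμ₁ : IsMeasureOn μ₁)
    (hμ₂ : IsMeasureOn μ₂)
    (hβ₁ : IsBoolHom β₁) (hβ₂ : IsBoolHom β₂) {a : ℕ → A₁} {b : ℕ → A₂}
    (hab : ∀ n, IsJointLimit μ₁ β₁ μ₂ β₂ (a n) (b n)) (n : ℕ) :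
    IsJointLimit μ₁ β₁ μ₂ β₂ (partialSups a n) (partialSups b n) := by
  induction n with
  | zero => simpa using hab 0
  | succ n ih =>
    rw [partialSups_add_one, partialSups_add_one]
    exact ih.sup hμ₁ hμ₂ hβ₁ hβ₂ (hab (n + 1))

theorem IsJointLimit.of_tendsto (hμ₁ : IsMeasureOn μ₁) (hμ₂ : IsMeasureOn μ₂)
    {p : ℕ → A₁} {q : ℕ → A₂} (hpq : ∀ n, IsJointLimit μ₁ β₁ μ₂ β₂ (p n) (q n))
    (hp : Tendsto (fun n => μ₁ (x ∆ p n)) atTop (𝓝 0))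
    (hq : Tendsto (fun n => μ₂ (y ∆ q n)) atTop (𝓝 0)) : IsJointLimit μ₁ β₁ μ₂ β₂ x y := by
  intro ε hε
  have hε₂ : 0 < ε / 2 := ENNReal.half_pos hε.ne'
  obtain ⟨n, hpn, hqn⟩ := ((hp.eventually (gt_mem_nhds hε₂)).and
    (hq.eventually (gt_mem_nhds hε₂))).exists
  obtain ⟨c, hp, hq⟩ := hpq n (ε / 2) hε₂
  exact ⟨c, hμ₁.symmDiff_lt_of_lt_half hpn hp, hμ₂.symmDiff_lt_of_lt_half hqn hq⟩

theorem IsJointLimit.of_isLUB [BooleanAlgebra B] (hμ₁ : IsMeasureOn μ₁) (hμ₂ : IsMeasureOn μ₂)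
    (hβ₁ : IsBoolHom β₁) (hβ₂ : IsBoolHom β₂) {a : ℕ → A₁} {b : ℕ → A₂}
    (hab : ∀ n, IsJointLimit μ₁ β₁ μ₂ β₂ (a n) (b n)) {s : A₁} {t : A₂}
    (hs : IsLUB (range a) s) (ht : IsLUB (range b) t) (hs_fin : μ₁ s ≠ ∞) (ht_fin : μ₂ t ≠ ∞) :
    IsJointLimit μ₁ β₁ μ₂ β₂ s t :=
  of_tendsto hμ₁ hμ₂ (IsJointLimit.partialSups hμ₁ hμ₂ hβ₁ hβ₂ hab)
    (hμ₁.tendsto_symmDiff_of_monotone (partialSups_monotone a)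
      (isLUB_range_partialSups_iff.2 hs) hs_fin)
    (hμ₂.tendsto_symmDiff_of_monotone (partialSups_monotone b)
      (isLUB_range_partialSups_iff.2 ht) ht_fin)

theorem IsJointLimit.measure_le (hμ₁ : IsMeasureOn μ₁) (hμ₂ : IsMeasureOn μ₂)
    (hμβ : ∀ c, μ₁ (β₁ c) = μ₂ (β₂ c)) (h : IsJointLimit μ₁ β₁ μ₂ β₂ x y) : μ₂ y ≤ μ₁ x := by
  refine ENNReal.le_of_forall_pos_le_add fun ε hε _ => ?_
  obtain ⟨c, hx, hy⟩ := h (ε / 2) (ENNReal.half_pos (by simpa using hε.ne'))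
  calc μ₂ y ≤ μ₂ (β₂ c) + μ₂ (y ∆ β₂ c) := hμ₂.le_add_symmDiff _ _
    _ ≤ μ₁ x + μ₁ (β₁ c ∆ x) + μ₂ (y ∆ β₂ c) := by
      rw [← hμβ]; gcongr; exact hμ₁.le_add_symmDiff _ _
    _ ≤ μ₁ x + ε := by
      rw [add_assoc, symmDiff_comm, ← ENNReal.add_halves (ε : ℝ≥0∞)]
      gcongr

theorem IsJointLimit.measure_eq (hμ₁ : IsMeasureOn μ₁) (hμ₂ : IsMeasureOn μ₂)
    (hμβ : ∀ c, μ₁ (β₁ c) = μ₂ (β₂ c)) (h : IsJointLimit μ₁ β₁ μ₂ β₂ x y) : μ₁ x = μ₂ y :=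
  le_antisymm (h.symm.measure_le hμ₂ hμ₁ fun c => (hμβ c).symm) (h.measure_le hμ₁ hμ₂ hμβ)

theorem IsJointLimit.unique [BooleanAlgebra B] (hμ₁ : IsMeasureOn μ₁) (hμ₂ : IsMeasureOn μ₂)
    (hβ₁ : IsBoolHom β₁) (hβ₂ : IsBoolHom β₂) (hμβ : ∀ c, μ₁ (β₁ c) = μ₂ (β₂ c))
    (hred₂ : ∀ z, μ₂ z = 0 → z = ⊥) (h : IsJointLimit μ₁ β₁ μ₂ β₂ x y)
    (h' : IsJointLimit μ₁ β₁ μ₂ β₂ x y') : y = y' := by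
  have hbot : IsJointLimit μ₁ β₁ μ₂ β₂ ⊥ (y ∆ y') := by
    simpa using h.symmDiff hμ₁ hμ₂ hβ₁ hβ₂ h'
  rw [← symmDiff_eq_bot]
  exact hred₂ _ (by rw [← hbot.measure_eq hμ₁ hμ₂ hμβ, hμ₁.1])

theorem exists_isJointLimit [BooleanAlgebra B] (hA₂ : IsAbstractSigmaAlgebra A₂)
    (hμ₁ : IsMeasureOn μ₁) (hμ₂ : IsMeasureOn μ₂) (hβ₁ : IsBoolHom β₁) (hβ₂ : IsBoolHom β₂)
    (hfin₁ : ∀ x, μ₁ x ≠ ∞) (hfin₂ : ∀ y, μ₂ y ≠ ∞) (hgen : IsSigmaGenerated β₁) (x : A₁) :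
    ∃ y, IsJointLimit μ₁ β₁ μ₂ β₂ x y := by
  refine hgen.induction (P := fun x => ∃ y, IsJointLimit μ₁ β₁ μ₂ β₂ x y)
    (fun c => ⟨β₂ c, isJointLimit_apply hμ₁ hμ₂ c⟩) (fun x ⟨y, h⟩ => ⟨yᶜ, h.compl hβ₁ hβ₂⟩)
    (fun a s ha hs => ?_) x
  choose b hb using ha
  obtain ⟨t, ht⟩ := hA₂ b
  exact ⟨t, .of_isLUB hμ₁ hμ₂ hβ₁ hβ₂ hb hs ht (hfin₁ s) (hfin₂ t)⟩

theorem isSigmaMorphism_of_isJointLimit [BooleanAlgebra B] (hA₂ : IsAbstractSigmaAlgebra A₂)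
    (hμ₁ : IsMeasureOn μ₁) (hμ₂ : IsMeasureOn μ₂) (hβ₁ : IsBoolHom β₁) (hβ₂ : IsBoolHom β₂)
    (hμβ : ∀ c, μ₁ (β₁ c) = μ₂ (β₂ c)) (hfin₁ : ∀ x, μ₁ x ≠ ∞) (hfin₂ : ∀ y, μ₂ y ≠ ∞)
    (hred₂ : ∀ z, μ₂ z = 0 → z = ⊥) {Φ : A₁ → A₂}
    (hΦ : ∀ x, IsJointLimit μ₁ β₁ μ₂ β₂ x (Φ x)) : IsSigmaMorphism Φ := by
  have hΦ_eq : ∀ {x y}, IsJointLimit μ₁ β₁ μ₂ β₂ x y → Φ x = y :=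
    fun h => (hΦ _).unique hμ₁ hμ₂ hβ₁ hβ₂ hμβ hred₂ h
  have hbot := isJointLimit_apply (β₁ := β₁) (β₂ := β₂) hμ₁ hμ₂ ⊥
  have htop := isJointLimit_apply (β₁ := β₁) (β₂ := β₂) hμ₁ hμ₂ ⊤
  rw [hβ₁.1, hβ₂.1] at hbot
  rw [hβ₁.2.1, hβ₂.2.1] at htop
  refine ⟨⟨hΦ_eq hbot, hΦ_eq htop, fun x x' => hΦ_eq ((hΦ x).inf hμ₁ hμ₂ hβ₁ hβ₂ (hΦ x')),
    fun x x' => hΦ_eq ((hΦ x).sup hμ₁ hμ₂ hβ₁ hβ₂ (hΦ x')),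
    fun x => hΦ_eq ((hΦ x).compl hβ₁ hβ₂)⟩, fun a s hs => ?_⟩
  obtain ⟨t, ht⟩ := hA₂ fun n => Φ (a n)
  rwa [hΦ_eq (.of_isLUB hμ₁ hμ₂ hβ₁ hβ₂ (fun n => hΦ (a n)) hs ht (hfin₁ s) (hfin₂ t))]

end IsJointLimit

theorem radonification_unique_general {B B1 B2 : Type*}
    [BooleanAlgebra B] [BooleanAlgebra B1] [BooleanAlgebra B2]
    (hB1 : IsAbstractSigmaAlgebra B1) (hB2 : IsAbstractSigmaAlgebra B2)
    (μ₀ : B → ℝ≥0∞) (h1 : μ₀ ⊤ ≤ 1)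
    (μ1 : B1 → ℝ≥0∞) (μ2 : B2 → ℝ≥0∞)
    (hμ1 : IsMeasureOn μ1) (hμ2 : IsMeasureOn μ2)
    (hred1 : ∀ x : B1, μ1 x = 0 → x = ⊥) (hred2 : ∀ x : B2, μ2 x = 0 → x = ⊥)
    (β1 : B → B1) (β2 : B → B2) (hβ1 : IsBoolHom β1) (hβ2 : IsBoolHom β2)
    (hc1 : μ1 ∘ β1 = μ₀) (hc2 : μ2 ∘ β2 = μ₀)
    (hgen1 : ∀ S : Set B1, Set.range β1 ⊆ S → (∀ x ∈ S, xᶜ ∈ S) →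
      (∀ a : ℕ → B1, (∀ n, a n ∈ S) → ∀ s : B1, IsLUB (Set.range a) s → s ∈ S) →
      S = Set.univ)
    (hgen2 : ∀ S : Set B2, Set.range β2 ⊆ S → (∀ x ∈ S, xᶜ ∈ S) →
      (∀ a : ℕ → B2, (∀ n, a n ∈ S) → ∀ s : B2, IsLUB (Set.range a) s → s ∈ S) →
      S = Set.univ) :
    ∃ Φ : B1 → B2, (IsSigmaMorphism Φ ∧ Φ ∘ β1 = β2) ∧
      Function.Bijective Φ ∧ μ2 ∘ Φ = μ1 ∧
      ∀ Ψ : B1 → B2, IsSigmaMorphism Ψ ∧ Ψ ∘ β1 = β2 → Ψ = Φ := by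
  have hμβ : ∀ c, μ1 (β1 c) = μ2 (β2 c) := fun c => (congrFun hc1 c).trans (congrFun hc2 c).symm
  have hfin1 : ∀ x, μ1 x ≠ ∞ := fun x => ne_top_of_le_ne_top ENNReal.one_ne_top <|
    (hμ1.mono le_top).trans (hβ1.2.1 ▸ (congrFun hc1 ⊤).trans_le h1)
  have hfin2 : ∀ y, μ2 y ≠ ∞ := fun y => ne_top_of_le_ne_top ENNReal.one_ne_top <|
    (hμ2.mono le_top).trans (hβ2.2.1 ▸ (congrFun hc2 ⊤).trans_le h1)
  choose Φ hΦ using exists_isJointLimit hB2 hμ1 hμ2 hβ1 hβ2 hfin1 hfin2 hgen1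
  choose Ψ hΨ using exists_isJointLimit hB1 hμ2 hμ1 hβ2 hβ1 hfin2 hfin1 hgen2
  have hΦσ := isSigmaMorphism_of_isJointLimit hB2 hμ1 hμ2 hβ1 hβ2 hμβ hfin1 hfin2 hred2 hΦ
  have hΦβ : Φ ∘ β1 = β2 := funext fun c =>
    (hΦ (β1 c)).unique hμ1 hμ2 hβ1 hβ2 hμβ hred2 (isJointLimit_apply hμ1 hμ2 c)
  refine ⟨Φ, ⟨hΦσ, hΦβ⟩, Function.bijective_iff_has_inverse.2 ⟨Ψ, fun x => ?_, fun y => ?_⟩,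
    funext fun x => ((hΦ x).measure_eq hμ1 hμ2 hμβ).symm,
    fun Ψ' hΨ' => hΨ'.1.eq_of_comp_eq hgen1 hΦσ (hΨ'.2.trans hΦβ.symm)⟩
  · exact (hΨ (Φ x)).unique hμ2 hμ1 hβ2 hβ1 (fun c => (hμβ c).symm) hred1 (hΦ x).symm
  · exact (hΦ (Ψ y)).unique hμ1 hμ2 hβ1 hβ2 hμβ hred2 (hΨ y).symm

/-- Uniqueness of the point-free radonification: between any two reduced,
generated measure extensions of an additive `[0,1]`-valued function there is a
unique σ-morphism over `B`, and it is a measure-preserving isomorphism. -/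
theorem radonification_unique {B B1 B2 : Type*}
    [BooleanAlgebra B] [BooleanAlgebra B1] [BooleanAlgebra B2]
    (hB1 : IsAbstractSigmaAlgebra B1) (hB2 : IsAbstractSigmaAlgebra B2)
    (μ₀ : B → ℝ≥0∞) (h0 : μ₀ ⊥ = 0) (h1 : μ₀ ⊤ ≤ 1)
    (hadd : ∀ a b : B, a ⊓ b = ⊥ → μ₀ (a ⊔ b) = μ₀ a + μ₀ b)
    (μ1 : B1 → ℝ≥0∞) (μ2 : B2 → ℝ≥0∞)
    (hμ1 : IsMeasureOn μ1) (hμ2 : IsMeasureOn μ2)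
    (hred1 : ∀ x : B1, μ1 x = 0 → x = ⊥) (hred2 : ∀ x : B2, μ2 x = 0 → x = ⊥)
    (β1 : B → B1) (β2 : B → B2) (hβ1 : IsBoolHom β1) (hβ2 : IsBoolHom β2)
    (hc1 : μ1 ∘ β1 = μ₀) (hc2 : μ2 ∘ β2 = μ₀)
    (hgen1 : ∀ S : Set B1, Set.range β1 ⊆ S → (∀ x ∈ S, xᶜ ∈ S) →
      (∀ a : ℕ → B1, (∀ n, a n ∈ S) → ∀ s : B1, IsLUB (Set.range a) s → s ∈ S) →
      S = Set.univ)
    (hgen2 : ∀ S : Set B2, Set.range β2 ⊆ S → (∀ x ∈ S, xᶜ ∈ S) →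
      (∀ a : ℕ → B2, (∀ n, a n ∈ S) → ∀ s : B2, IsLUB (Set.range a) s → s ∈ S) →
      S = Set.univ) :
    ∃ Φ : B1 → B2, (IsSigmaMorphism Φ ∧ Φ ∘ β1 = β2) ∧
      Function.Bijective Φ ∧ μ2 ∘ Φ = μ1 ∧
      ∀ Ψ : B1 → B2, IsSigmaMorphism Ψ ∧ Ψ ∘ β1 = β2 → Ψ = Φ :=
  radonification_unique_general hB1 hB2 μ₀ h1 μ1 μ2 hμ1 hμ2 hred1 hred2 β1 β2 hβ1 hβ2 hc1 hc2 hgen1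
    hgen2
end

section
/- Let B be a Boolean algebra and μ : B → ℝ≥0∞ a finitely additive function with μ ⊤ ≤ 1 which is reduced (μ u = 0 implies u = ⊥). Let s : ℕ → B and x ∈ B be such that s n ≤ x for all n and μ x = ⨆ n, μ (s 0 ⊔ s 1 ⊔ ⋯ ⊔ s n). Then x is a least upper bound of Set.range s, i.e. IsLUB (Set.range s) x. -/
/-!
If `y` bounds every `s n`, then so does `x ⊓ y`, hence `μ (x ⊓ y)` dominates every
`μ (s 0 ⊔ ⋯ ⊔ s n)` and therefore `μ x`. Additivity gives
`μ x = μ (x ⊓ y) + μ (x \ y)`, and since `μ ⊤ ≤ 1` keeps these values finite, `μ (x \ y) = 0`;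
as `μ` is reduced, `x \ y = ⊥`, i.e. `x ≤ y`.
-/

open scoped ENNReal

section FinitelyAdditive

variable {B : Type*} [BooleanAlgebra B] {μ : B → ℝ≥0∞}

theorem measure_eq_add_measure_sdiff
    (hadd : ∀ u v : B, u ⊓ v = ⊥ → μ (u ⊔ v) = μ u + μ v) {a b : B} (hab : a ≤ b) :
    μ b = μ a + μ (b \ a) := by
  conv_lhs => rw [← sup_sdiff_cancel_right hab]
  exact hadd a (b \ a) inf_sdiff_self_right

theorem monotone_of_additive_s13
    (hadd : ∀ u v : B, u ⊓ v = ⊥ → μ (u ⊔ v) = μ u + μ v) : Monotone μ :=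
  fun _ _ hab => (measure_eq_add_measure_sdiff hadd hab).symm ▸ le_self_add

theorem eq_of_le_of_measure_le
    (hadd : ∀ u v : B, u ⊓ v = ⊥ → μ (u ⊔ v) = μ u + μ v)
    (hred : ∀ u : B, μ u = 0 → u = ⊥) {a b : B} (hab : a ≤ b) (hμ : μ b ≤ μ a)
    (ha : μ a ≠ ∞) : a = b := by
  have hsdiff : μ (b \ a) = 0 := by
    rw [measure_eq_add_measure_sdiff hadd hab] at hμ
    exact nonpos_iff_eq_zero.1 ((ENNReal.add_le_add_iff_left ha).1 (by rwa [add_zero]))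
  exact le_antisymm hab (sdiff_eq_bot_iff.1 (hred _ hsdiff))

end FinitelyAdditive

theorem isLUB_of_measure_eq_iSup_general {B : Type*} [BooleanAlgebra B]
    (μ : B → ℝ≥0∞)
    (hadd : ∀ u v : B, u ⊓ v = ⊥ → μ (u ⊔ v) = μ u + μ v)
    (htop : μ ⊤ ≤ 1)
    (hred : ∀ u : B, μ u = 0 → u = ⊥)
    (s : ℕ → B) (x : B) (hub : ∀ n, s n ≤ x)
    (hx : μ x = ⨆ n, μ ((Finset.range (n + 1)).sup s)) :
    IsLUB (Set.range s) x := by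
  have hmono := monotone_of_additive_s13 hadd
  refine ⟨Set.forall_mem_range.2 hub, fun y hy => ?_⟩
  have hbound : ∀ n, s n ≤ x ⊓ y := fun n => le_inf (hub n) (hy (Set.mem_range_self n))
  have hle : μ x ≤ μ (x ⊓ y) := hx ▸ iSup_le fun n => hmono (Finset.sup_le fun i _ => hbound i)
  have hfin : μ (x ⊓ y) ≠ ∞ := ne_top_of_le_ne_top ENNReal.one_ne_top ((hmono le_top).trans htop)
  exact inf_eq_left.1 (eq_of_le_of_measure_le hadd hred inf_le_left hle hfin)

/-- For a reduced finitely additive function `μ` with `μ ⊤ ≤ 1` on a Boolean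
algebra, an upper bound `x` of a sequence `s` whose measure is the limit of the
measures of the finite joins of the `s n` is a least upper bound of the `s n`. -/
theorem isLUB_of_measure_eq_iSup {B : Type*} [BooleanAlgebra B]
    (μ : B → ℝ≥0∞) (h0 : μ ⊥ = 0)
    (hadd : ∀ u v : B, u ⊓ v = ⊥ → μ (u ⊔ v) = μ u + μ v)
    (htop : μ ⊤ ≤ 1)
    (hred : ∀ u : B, μ u = 0 → u = ⊥)
    (s : ℕ → B) (x : B) (hub : ∀ n, s n ≤ x)
    (hx : μ x = ⨆ n, μ ((Finset.range (n + 1)).sup s)) :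
    IsLUB (Set.range s) x :=
  isLUB_of_measure_eq_iSup_general μ hadd htop hred s x hub hx
end

section
/- Let B be a Boolean algebra, μ : B → ℝ≥0∞ finitely additive with μ ⊤ ≤ 1, and s : ℕ → B. For a ∈ B put λ a := ⨆ n, μ (a ⊓ (s 0 ⊔ s 1 ⊔ ⋯ ⊔ s n)). Then λ a ≤ μ a for all a, and the function ν : B × B → ℝ≥0∞ on the product Boolean algebra defined by ν (a, b) := λ a + (μ b − λ b) (truncated subtraction in ℝ≥0∞) is finitely additive — ν (⊥, ⊥) = 0 and ν ((a, b) ⊔ (a', b')) = ν (a, b) + ν (a', b') whenever (a, b) ⊓ (a', b') = (⊥, ⊥) — and satisfies ν (a, a) = μ a for all a ∈ B. -/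
open scoped ENNReal

/-- `lamapprox μ s a = ⨆ n, μ (a ⊓ (s 0 ⊔ ⋯ ⊔ s n))`. -/
noncomputable def lamapprox {B : Type*} [BooleanAlgebra B]
    (μ : B → ℝ≥0∞) (s : ℕ → B) (a : B) : ℝ≥0∞ :=
  ⨆ n, μ (a ⊓ (Finset.range (n + 1)).sup s)

/-- The successor-step additive function `ν (a, b) = λ a + (μ b - λ b)` on the
product Boolean algebra `B × B = B ⨿ 2^{x,y}`. -/
noncomputable def nustep {B : Type*} [BooleanAlgebra B]
    (μ : B → ℝ≥0∞) (s : ℕ → B) (p : B × B) : ℝ≥0∞ :=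
  lamapprox μ s p.1 + (μ p.2 - lamapprox μ s p.2)

/-- The successor step of the transfinite construction: `λ ≤ μ`, and
`ν (a, b) = λ a + (μ b - λ b)` is finitely additive on the product Boolean
algebra and restricts to `μ` on the diagonal. -/
theorem nustep_additive {B : Type*} [BooleanAlgebra B]
    (μ : B → ℝ≥0∞) (h0 : μ ⊥ = 0)
    (hadd : ∀ u v : B, u ⊓ v = ⊥ → μ (u ⊔ v) = μ u + μ v)
    (htop : μ ⊤ ≤ 1) (s : ℕ → B) :
    (∀ a : B, lamapprox μ s a ≤ μ a) ∧
    nustep μ s (⊥, ⊥) = 0 ∧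
    (∀ p q : B × B, p ⊓ q = (⊥, ⊥) →
      nustep μ s (p ⊔ q) = nustep μ s p + nustep μ s q) ∧
    ∀ a : B, nustep μ s (a, a) = μ a := by
  -- μ is monotone
  have hmono : ∀ u v : B, u ≤ v → μ u ≤ μ v := by
    intro u v huv
    have hdisj : u ⊓ (v \ u) = ⊥ := by
      rw [inf_sdiff_self_right]
    have : μ (u ⊔ v \ u) = μ u + μ (v \ u) := hadd _ _ hdisj
    rw [sup_sdiff_cancel' le_rfl huv] at this
    rw [this]; exact le_self_add
  -- λ ≤ μ
  have hle : ∀ a : B, lamapprox μ s a ≤ μ a := by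
    intro a
    exact iSup_le fun n => hmono _ _ inf_le_left
  -- λ is additive
  have hlamadd : ∀ a a' : B, a ⊓ a' = ⊥ →
      lamapprox μ s (a ⊔ a') = lamapprox μ s a + lamapprox μ s a' := by
    intro a a' hdisj
    have hmonoc : Monotone fun n : ℕ => (Finset.range (n + 1)).sup s := by
      intro m n hmn
      exact Finset.sup_mono (Finset.range_subset_range.2 (by omega))
    have hm1 : Monotone fun n : ℕ => μ (a ⊓ (Finset.range (n + 1)).sup s) :=
      fun m n hmn => hmono _ _ (inf_le_inf_left a (hmonoc hmn))
    have hm2 : Monotone fun n : ℕ => μ (a' ⊓ (Finset.range (n + 1)).sup s) :=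
      fun m n hmn => hmono _ _ (inf_le_inf_left a' (hmonoc hmn))
    unfold lamapprox
    rw [ENNReal.iSup_add_iSup_of_monotone hm1 hm2]
    congr 1
    funext n
    have h1 : (a ⊓ (Finset.range (n + 1)).sup s) ⊓ (a' ⊓ (Finset.range (n + 1)).sup s) = ⊥ := by
      rw [inf_inf_inf_comm, hdisj, bot_inf_eq]
    rw [inf_sup_right] at *
    exact hadd _ _ h1
  -- everything is finite
  have hfin : ∀ a : B, μ a ≠ ⊤ := fun a =>
    ne_top_of_le_ne_top (by norm_num) ((hmono a ⊤ le_top).trans htop)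
  have hlamfin : ∀ a : B, lamapprox μ s a ≠ ⊤ := fun a =>
    ne_top_of_le_ne_top (hfin a) (hle a)
  refine ⟨hle, ?_, ?_, ?_⟩
  · show lamapprox μ s ⊥ + (μ ⊥ - lamapprox μ s ⊥) = 0
    have : lamapprox μ s ⊥ = 0 := by
      unfold lamapprox
      simp [h0]
    simp [this, h0]
  · rintro ⟨a, b⟩ ⟨a', b'⟩ hpq
    have ha : a ⊓ a' = ⊥ := congrArg Prod.fst hpq
    have hb : b ⊓ b' = ⊥ := congrArg Prod.snd hpq
    show lamapprox μ s (a ⊔ a') + (μ (b ⊔ b') - lamapprox μ s (b ⊔ b')) = _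
    rw [hlamadd a a' ha, hlamadd b b' hb, hadd b b' hb]
    have key : μ b + μ b' - (lamapprox μ s b + lamapprox μ s b')
        = (μ b - lamapprox μ s b) + (μ b' - lamapprox μ s b') := by
      exact ((ENNReal.cancel_of_ne (hlamfin b)).tsub_add_tsub_comm
        (ENNReal.cancel_of_ne (hlamfin b')) (hle b) (hle b')).symm
    rw [key]
    show _ = lamapprox μ s a + (μ b - lamapprox μ s b) +
      (lamapprox μ s a' + (μ b' - lamapprox μ s b'))
    ring
  · intro a
    show lamapprox μ s a + (μ a - lamapprox μ s a) = μ a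
    exact add_tsub_cancel_of_le (hle a)
end

section
/- Let Σ be an abstract σ-algebra with measure μ, and let (a : Fin m → Σ, x : Fin m → ℝ≥0∞) be simple data (a pairwise disjoint with finite supremum ⊤). Then the integral with respect to μ of the induced simple function s — defined, like every point-free integral, as the supremum of ∑ j, μ (b j) * y j over all simple data (b, y) whose induced simple function lies below s — equals ∑ i, μ (a i) * x i. In particular, the value ∑ i, μ (a i) * x i depends only on the simple function s and not on the simple data representing it. -/
open scoped ENNReal

/-- Finite additivity from countable additivity. -/
lemma measure_finsup {A : Type*} [BooleanAlgebra A] (μ : A → ℝ≥0∞) (h0 : μ ⊥ = 0)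
    (hμ : ∀ a : ℕ → A, (∀ i j, i ≠ j → a i ⊓ a j = ⊥) →
      ∀ s, IsLUB (Set.range a) s → μ s = ∑' n, μ (a n))
    {m : ℕ} (a : Fin m → A) (hd : ∀ i j, i ≠ j → a i ⊓ a j = ⊥) :
    μ (Finset.univ.sup a) = ∑ i, μ (a i) := by
  set a' : ℕ → A := fun n => if h : n < m then a ⟨n, h⟩ else ⊥ with ha'
  have hd' : ∀ i j, i ≠ j → a' i ⊓ a' j = ⊥ := by
    intro i j hij
    by_cases hi : i < m <;> by_cases hj : j < m <;> simp [ha', hi, hj]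
    exact hd ⟨i, hi⟩ ⟨j, hj⟩ (by simpa [Fin.ext_iff] using hij)
  have hlub : IsLUB (Set.range a') (Finset.univ.sup a) := by
    constructor
    · rintro _ ⟨n, rfl⟩
      by_cases hn : n < m
      · simp only [ha', dif_pos hn]
        exact Finset.le_sup (Finset.mem_univ _)
      · simp [ha', hn]
    · intro b hb
      refine Finset.sup_le fun i _ => ?_
      have : a' i.val = a i := by simp [ha', i.isLt]
      exact this ▸ hb ⟨i.val, rfl⟩
  rw [hμ a' hd' _ hlub]
  rw [tsum_eq_sum (s := Finset.range m) (fun n hn => by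
    simp [ha', Finset.mem_range.not.mp hn, h0])]
  rw [Finset.sum_range fun n => μ (a' n)]
  refine Finset.sum_congr rfl fun i _ => ?_
  simp [ha', i.isLt]

/-- The point-free integral of a simple function equals the expected finite sum;
in particular the sum depends only on the induced simple function and not on the
representing simple data. -/
theorem pfIntegral_simple {A : Type*} [BooleanAlgebra A]
    (hA : ∀ a : ℕ → A, ∃ s, IsLUB (Set.range a) s)
    (μ : A → ℝ≥0∞) (h0 : μ ⊥ = 0)
    (hμ : ∀ a : ℕ → A, (∀ i j, i ≠ j → a i ⊓ a j = ⊥) →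
      ∀ s, IsLUB (Set.range a) s → μ s = ∑' n, μ (a n))
    (d : SimpleData A) :
    pfIntegral μ d.toFun = ∑ i, μ (d.a i) * d.x i := by
  classical
  refine le_antisymm ?_ ?_
  · refine iSup₂_le fun e he => ?_
    -- key: if x-values mismatch, the pieces are disjoint
    have key : ∀ (i : Fin d.m) (j : Fin e.m), ¬ e.x j ≤ d.x i → d.a i ⊓ e.a j = ⊥ := by
      intro i j hxy
      have h1 : d.a i ≤ e.toFun (Set.Iic (d.x i)) := by
        refine le_trans ?_ (he (d.x i))
        exact Finset.le_sup (by simp [SimpleData.toFun])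
      refine le_antisymm ?_ bot_le
      calc d.a i ⊓ e.a j ≤ e.toFun (Set.Iic (d.x i)) ⊓ e.a j :=
            inf_le_inf h1 le_rfl
        _ ≤ ⊥ := by
            rw [SimpleData.toFun, Finset.sup_inf_distrib_right]
            refine Finset.sup_le fun j' hj' => ?_
            have hj'x : e.x j' ≤ d.x i := by simpa using hj'
            have : j' ≠ j := by rintro rfl; exact hxy hj'x
            exact (e.disjoint j' j this).le
    have hstep1 : ∀ j : Fin e.m, μ (e.a j) = ∑ i, μ (d.a i ⊓ e.a j) := by
      intro j
      have hdisj : ∀ i i' : Fin d.m, i ≠ i' →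
          (d.a i ⊓ e.a j) ⊓ (d.a i' ⊓ e.a j) = ⊥ := by
        intro i i' hii
        refine le_antisymm ?_ bot_le
        calc (d.a i ⊓ e.a j) ⊓ (d.a i' ⊓ e.a j) ≤ d.a i ⊓ d.a i' :=
              inf_le_inf inf_le_left inf_le_left
          _ = ⊥ := d.disjoint i i' hii
      have := measure_finsup μ h0 hμ (fun i => d.a i ⊓ e.a j) hdisj
      rwa [← Finset.sup_inf_distrib_right, d.sup_eq_top, top_inf_eq] at this
    have hstep2 : ∀ i : Fin d.m, μ (d.a i) = ∑ j, μ (d.a i ⊓ e.a j) := by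
      intro i
      have hdisj : ∀ j j' : Fin e.m, j ≠ j' →
          (d.a i ⊓ e.a j) ⊓ (d.a i ⊓ e.a j') = ⊥ := by
        intro j j' hjj
        refine le_antisymm ?_ bot_le
        calc (d.a i ⊓ e.a j) ⊓ (d.a i ⊓ e.a j') ≤ e.a j ⊓ e.a j' :=
              inf_le_inf inf_le_right inf_le_right
          _ = ⊥ := e.disjoint j j' hjj
      have := measure_finsup μ h0 hμ (fun j => d.a i ⊓ e.a j) hdisj
      rwa [← Finset.sup_inf_distrib_left, e.sup_eq_top, inf_top_eq] at this
    calc ∑ j, μ (e.a j) * e.x j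
        = ∑ j, ∑ i, μ (d.a i ⊓ e.a j) * e.x j := by
          refine Finset.sum_congr rfl fun j _ => ?_
          rw [hstep1 j, Finset.sum_mul]
      _ = ∑ i, ∑ j, μ (d.a i ⊓ e.a j) * e.x j := Finset.sum_comm
      _ ≤ ∑ i, ∑ j, μ (d.a i ⊓ e.a j) * d.x i := by
          refine Finset.sum_le_sum fun i _ => Finset.sum_le_sum fun j _ => ?_
          by_cases hxy : e.x j ≤ d.x i
          · exact mul_le_mul_right hxy _
          · simp [key i j hxy, h0]
      _ = ∑ i, μ (d.a i) * d.x i := by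
          refine Finset.sum_congr rfl fun i _ => ?_
          rw [hstep2 i, Finset.sum_mul]
  · exact le_iSup₂_of_le d (fun t => le_rfl) le_rfl
end
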